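/- arXiv:1609.05951 — 5 statements merged into one kernel-verified Lean document; each statement's English description precedes it below -/
import Mathlib

section
/- For every k ≥ 3 there is a constant c_k > 0 such that for all sufficiently large n ∈ ℕ there exists a finite sequence of real numbers of length at least e_{k−2}(c_k·n) that contains no E_k-indiscernible subsequence of length n. In particular, the Ramsey number R_{E_k}(n) (the least N such that every sequence of reals of length N contains an E_k-indiscernible subsequence of length n) satisfies R_{E_k}(n) ≥ e_{k−2}(c_k·n) for all sufficiently large n. -/
/-!
Erdős–Hajnal stepping-up. Write `δ(x, y)` for the top bit in which `x ≠ y`. A sequence `b` with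
gaps at least `2` is stepped up to `stepUp b i = 4 + ∑_{t ∈ bits(i)} 2 ^ b t` on `[0, 2 ^ m)`.
For `x < y` the difference `stepUp b y - stepUp b x` is `2 ^ b (δ x y)` up to a factor in
`[2/3, 4/3]`, so along a tuple the consecutive differences compare as the consecutive `δ`'s do
and their logarithms are within `1` of `b ∘ δ`. If `E_{k+3}` on `b` is insensitive to such
errors, `E_{k+4}` on a tuple of `stepUp b` is therefore decided by its pattern of `δ`'s.

In a subsequence of length `n` neighbouring `δ`'s differ. A peak of the `δ`'s gives a tuple
satisfying `E_{k+4}` (third clause), a valley gives one failing it, and without a peak (or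
without a valley) there is a monotone run of `n / 2` consecutive `δ`'s; read as indices into `b`
they contain tuples of both kinds by induction, and these lift to tuples of `stepUp b`.
The base case `E_3` is the same construction on `b t = 2 t + 4` with `m = 2 ^ (n - 2)`:
monotone `δ`'s along `n` terms would need `n - 1` distinct values below `n - 2`.
-/

/-- A finite sequence `a` is `E`-indiscernible for a `k`-ary relation `E` if `E` holds on all
increasing `k`-tuples from the sequence, or fails on all of them. -/
def IsIndiscernible {X : Type*} {k m : ℕ} (E : (Fin k → X) → Prop) (a : Fin m → X) : Prop :=
  (∀ s : Fin k → Fin m, StrictMono s → E (a ∘ s)) ∨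
  (∀ s : Fin k → Fin m, StrictMono s → ¬ E (a ∘ s))

/-- The iterated exponential: `e₀(x) = x`, `e_{n+1}(x) = 2^(e_n(x))`. -/
noncomputable def eTower : ℕ → ℝ → ℝ
  | 0, x => x
  | n + 1, x => (2 : ℝ) ^ (eTower n x)

/-- Base-2 logarithm, set to `0` on nonpositive reals. -/
noncomputable def log2' (t : ℝ) : ℝ := if t ≤ 0 then 0 else Real.logb 2 t

/-- Auxiliary form of the relations `E_k` from the paper, on `ℕ`-indexed tuples of reals;
`EAux k x` only depends on the first `k + 3` coordinates of `x` and represents the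
`(k+3)`-ary relation `E_{k+3}`. -/
def EAux : ℕ → (ℕ → ℝ) → Prop
  | 0, x => 0 ≤ x 0 + x 2 - 2 * x 1
  | k + 1, x =>
      ((∀ i < k + 2, x (i + 1) - x i < x (i + 2) - x (i + 1)) ∧
        EAux k fun j => log2' (x (j + 1) - x j)) ∨
      ((∀ i < k + 2, x (i + 2) - x (i + 1) < x (i + 1) - x i) ∧
        EAux k fun j => log2' (x (k + 3 - j) - x (k + 2 - j))) ∨
      (x 1 - x 0 < x 2 - x 1 ∧ x 3 - x 2 < x 2 - x 1)

/-- The `(k+3)`-ary relation `E_{k+3}` on ℝ. -/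
def ERel (k : ℕ) : (Fin (k + 3) → ℝ) → Prop :=
  fun x => EAux k fun i => if h : i < k + 3 then x ⟨i, h⟩ else 0

theorem eAux_congr (k : ℕ) {x y : ℕ → ℝ} (h : ∀ j < k + 3, x j = y j) :
    EAux k x ↔ EAux k y := by
  induction k generalizing x y with
  | zero => simp only [EAux, h 0 (by omega), h 1 (by omega), h 2 (by omega)]
  | succ k ih =>
    have h3 : ∀ i < k + 2, x i = y i ∧ x (i + 1) = y (i + 1) ∧ x (i + 2) = y (i + 2) :=
      fun i hi => ⟨h i (by omega), h (i + 1) (by omega), h (i + 2) (by omega)⟩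
    simp only [EAux]
    rw [ih (x := fun j => log2' (x (j + 1) - x j)) (y := fun j => log2' (y (j + 1) - y j))
        fun j hj => by rw [h j (by omega), h (j + 1) (by omega)],
      ih (x := fun j => log2' (x (k + 3 - j) - x (k + 2 - j)))
        (y := fun j => log2' (y (k + 3 - j) - y (k + 2 - j)))
        fun j hj => by rw [h (k + 3 - j) (by omega), h (k + 2 - j) (by omega)],
      h 0 (by omega), h 1 (by omega), h 2 (by omega), h 3 (by omega)]
    refine or_congr (and_congr_left fun _ => forall₂_congr fun i hi => ?_)
      (or_congr (and_congr_left fun _ => forall₂_congr fun i hi => ?_) Iff.rfl) <;>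
    rw [(h3 i hi).1, (h3 i hi).2.1, (h3 i hi).2.2]

def topDiffBit (x y : ℕ) : ℕ := Nat.log2 (x ^^^ y)

theorem testBit_eq_of_topDiffBit_lt {x y t : ℕ} (hne : x ≠ y) (ht : topDiffBit x y < t) :
    x.testBit t = y.testBit t := by
  have hxor := Nat.testBit_lt_two_pow ((Nat.log2_lt (Nat.xor_ne_zero_iff.2 hne)).1 ht)
  rw [Nat.testBit_xor] at hxor
  simpa using hxor

theorem testBit_topDiffBit_ne {x y : ℕ} (hne : x ≠ y) :
    x.testBit (topDiffBit x y) ≠ y.testBit (topDiffBit x y) := by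
  have hxor := Nat.testBit_log2 (Nat.xor_ne_zero_iff.2 hne)
  rw [Nat.testBit_xor] at hxor
  simpa [topDiffBit] using hxor

theorem testBit_topDiffBit_of_lt {x y : ℕ} (h : x < y) :
    x.testBit (topDiffBit x y) = false ∧ y.testBit (topDiffBit x y) = true := by
  have hne := (testBit_topDiffBit_ne h.ne).symm
  cases hx : x.testBit (topDiffBit x y)
  · exact ⟨rfl, by simpa [hx] using hne⟩
  · have hy : y.testBit (topDiffBit x y) = false := by simpa [hx] using hne
    exact absurd h (Nat.lt_of_testBit _ hy hx fun t ht =>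
      (testBit_eq_of_topDiffBit_lt h.ne ht).symm).not_gt

theorem topDiffBit_eq_of_testBit {x y q : ℕ} (hq : x.testBit q ≠ y.testBit q)
    (habove : ∀ t, q < t → x.testBit t = y.testBit t) : topDiffBit x y = q := by
  have hbit : (x ^^^ y).testBit q = true := by simpa [Nat.testBit_xor] using hq
  have hne : x ^^^ y ≠ 0 := fun h0 => by simp [h0] at hbit
  refine (Nat.log2_eq_iff hne).2 ⟨Nat.ge_two_pow_of_testBit hbit, Nat.lt_pow_two_of_testBit _ ?_⟩
  intro t ht
  simp [Nat.testBit_xor, habove t ht]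

theorem topDiffBit_ne_topDiffBit {x y z : ℕ} (hxy : x < y) (hyz : y < z) :
    topDiffBit x y ≠ topDiffBit y z := fun h => by
  simpa [h, (testBit_topDiffBit_of_lt hyz).1] using (testBit_topDiffBit_of_lt hxy).2

theorem topDiffBit_eq_max {x y z : ℕ} (hxy : x < y) (hyz : y < z) :
    topDiffBit x z = max (topDiffBit x y) (topDiffBit y z) := by
  have habove : ∀ t, max (topDiffBit x y) (topDiffBit y z) < t → x.testBit t = z.testBit t :=
    fun t ht => (testBit_eq_of_topDiffBit_lt hxy.ne (lt_of_le_of_lt (le_max_left _ _) ht)).trans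
      (testBit_eq_of_topDiffBit_lt hyz.ne (lt_of_le_of_lt (le_max_right _ _) ht))
  refine topDiffBit_eq_of_testBit ?_ habove
  rcases lt_or_gt_of_ne (topDiffBit_ne_topDiffBit hxy hyz) with h | h
  · rw [max_eq_right h.le, testBit_eq_of_topDiffBit_lt hxy.ne h]
    exact testBit_topDiffBit_ne hyz.ne
  · rw [max_eq_left h.le, ← testBit_eq_of_topDiffBit_lt hyz.ne h]
    exact testBit_topDiffBit_ne hxy.ne

theorem topDiffBit_lt_of_lt_two_pow {x y m : ℕ} (hne : x ≠ y) (hx : x < 2 ^ m) (hy : y < 2 ^ m) :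
    topDiffBit x y < m :=
  (Nat.log2_lt (Nat.xor_ne_zero_iff.2 hne)).2 (Nat.xor_lt_two_pow hx hy)

open Finset in
noncomputable def bitSum (w : ℕ → ℝ) (i : ℕ) : ℝ :=
  ∑ t ∈ range i, if i.testBit t then w t else 0

open Finset in
theorem bitSum_eq_sum_range (w : ℕ → ℝ) {i R : ℕ} (h : i ≤ R) :
    bitSum w i = ∑ t ∈ range R, if i.testBit t then w t else 0 := by
  refine sum_subset (range_subset_range.2 h) fun t _ ht => ?_
  rw [Nat.testBit_lt_two_pow ((not_lt.1 (mem_range.not.1 ht)).trans_lt t.lt_two_pow_self),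
    if_neg Bool.false_ne_true]

section Lacunary

open Finset

variable {w : ℕ → ℝ} (hw : ∀ t, 0 < w t) (hr : ∀ t, 4 * w t ≤ w (t + 1))
include hw hr

theorem four_mul_le_of_lt {s t : ℕ} (h : s < t) : 4 * w s ≤ w t := by
  induction t, h using Nat.le_induction with
  | base => exact hr s
  | succ t _ ih => linarith [hr t, hw t]

theorem three_mul_sum_range_le (p : ℕ) : 3 * ∑ t ∈ range p, w t ≤ w p := by
  induction p with
  | zero => simpa using (hw 0).le
  | succ p ih => rw [sum_range_succ]; linarith [hr p]

/-- The weights below the top differing bit sum to at most a third of its weight. -/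
theorem bitSum_sub_bounds {x y : ℕ} (hxy : x < y) :
    2 * w (topDiffBit x y) ≤ 3 * (bitSum w y - bitSum w x) ∧
      3 * (bitSum w y - bitSum w x) ≤ 4 * w (topDiffBit x y) := by
  obtain ⟨hx, hy⟩ := testBit_topDiffBit_of_lt hxy
  set d := topDiffBit x y
  set g : ℕ → ℝ := fun t => (if y.testBit t then w t else 0) - if x.testBit t then w t else 0
  have hsplit : bitSum w y - bitSum w x = ∑ t ∈ range d, g t + w d := by
    rw [bitSum_eq_sum_range w (le_max_left y (d + 1)),
      bitSum_eq_sum_range w (hxy.le.trans (le_max_left y (d + 1))), ← sum_sub_distrib,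
      ← sum_subset (range_subset_range.2 (le_max_right y (d + 1))), sum_range_succ]
    · simp [g, hx, hy]
    · intro t _ ht
      simp [testBit_eq_of_topDiffBit_lt hxy.ne (not_lt.1 (mem_range.not.1 ht))]
  have hsmall : |∑ t ∈ range d, g t| ≤ ∑ t ∈ range d, w t := by
    refine (abs_sum_le_sum_abs _ _).trans (sum_le_sum fun t _ => abs_le.2 ?_)
    constructor <;> simp only [g] <;> split_ifs <;> linarith [hw t]
  have hsum := three_mul_sum_range_le hw hr d
  rw [hsplit]
  constructor <;> linarith [abs_le.1 hsmall]

end Lacunary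

theorem abs_log2'_sub_lt_one {β D : ℝ} (h₁ : (2 : ℝ) ^ β / 2 < D) (h₂ : D < 2 * (2 : ℝ) ^ β) :
    |log2' D - β| < 1 := by
  have hD : 0 < D := lt_trans (by positivity) h₁
  rw [log2', if_neg hD.not_ge, abs_sub_lt_iff]
  constructor
  · refine sub_lt_iff_lt_add'.2 ((Real.logb_lt_iff_lt_rpow one_lt_two hD).2 ?_)
    rwa [Real.rpow_add two_pos, Real.rpow_one, mul_comm]
  · refine sub_lt_comm.1 ((Real.lt_logb_iff_rpow_lt one_lt_two hD).2 ?_)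
    rwa [Real.rpow_sub two_pos, Real.rpow_one]

def IsGapped (b : ℕ → ℝ) : Prop := 4 ≤ b 0 ∧ ∀ i, b i + 2 ≤ b (i + 1)

noncomputable def stepUp (b : ℕ → ℝ) (i : ℕ) : ℝ := 4 + bitSum (fun t => (2 : ℝ) ^ b t) i

namespace IsGapped

variable {b : ℕ → ℝ} (hb : IsGapped b)
include hb

theorem sixteen_le_rpow (t : ℕ) : 16 ≤ (2 : ℝ) ^ b t := by
  have hmono : Monotone b := monotone_nat_of_le_succ fun i => by linarith [hb.2 i]
  calc (16 : ℝ) = 2 ^ (4 : ℝ) := by norm_num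
    _ ≤ 2 ^ b t := Real.rpow_le_rpow_of_exponent_le one_le_two (hb.1.trans (hmono t.zero_le))

theorem four_mul_rpow_le (t : ℕ) : 4 * (2 : ℝ) ^ b t ≤ 2 ^ b (t + 1) :=
  calc 4 * (2 : ℝ) ^ b t = 2 ^ (b t + 2) := by rw [Real.rpow_add two_pos, Real.rpow_two]; ring
    _ ≤ 2 ^ b (t + 1) := Real.rpow_le_rpow_of_exponent_le one_le_two (hb.2 t)

theorem stepUp_sub_bounds {x y : ℕ} (hxy : x < y) :
    2 * (2 : ℝ) ^ b (topDiffBit x y) ≤ 3 * (stepUp b y - stepUp b x) ∧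
      3 * (stepUp b y - stepUp b x) ≤ 4 * (2 : ℝ) ^ b (topDiffBit x y) := by
  simpa [stepUp] using bitSum_sub_bounds (fun t => by positivity) hb.four_mul_rpow_le hxy

theorem four_mul_rpow_le_of_lt {s t : ℕ} (h : s < t) : 4 * (2 : ℝ) ^ b s ≤ 2 ^ b t :=
  four_mul_le_of_lt (fun t => by positivity) hb.four_mul_rpow_le h

/-- The comparison of consecutive differences of `stepUp b` has margin `4`: it survives
perturbing each value by less than `1`. -/
theorem stepUp_sub_add_four_lt {x y z : ℕ} (hxy : x < y) (hyz : y < z)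
    (h : topDiffBit x y < topDiffBit y z) :
    stepUp b y - stepUp b x + 4 < stepUp b z - stepUp b y := by
  linarith [(hb.stepUp_sub_bounds hxy).2, (hb.stepUp_sub_bounds hyz).1,
    hb.four_mul_rpow_le_of_lt h, hb.sixteen_le_rpow (topDiffBit x y)]

theorem stepUp_sub_add_four_lt' {x y z : ℕ} (hxy : x < y) (hyz : y < z)
    (h : topDiffBit y z < topDiffBit x y) :
    stepUp b z - stepUp b y + 4 < stepUp b y - stepUp b x := by
  linarith [(hb.stepUp_sub_bounds hxy).1, (hb.stepUp_sub_bounds hyz).2,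
    hb.four_mul_rpow_le_of_lt h, hb.sixteen_le_rpow (topDiffBit y z)]

theorem abs_log2'_sub_lt {x y : ℕ} (hxy : x < y) {D : ℝ}
    (hD : |D - (stepUp b y - stepUp b x)| ≤ 2) : |log2' D - b (topDiffBit x y)| < 1 := by
  have := hb.stepUp_sub_bounds hxy
  have := hb.sixteen_le_rpow (topDiffBit x y)
  apply abs_log2'_sub_lt_one <;> linarith [abs_le.1 hD]

end IsGapped

theorem isGapped_stepUp {b : ℕ → ℝ} (hb : IsGapped b) : IsGapped (stepUp b) := by
  refine ⟨by simp [stepUp, bitSum], fun i => ?_⟩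
  linarith [(hb.stepUp_sub_bounds i.lt_succ_self).1, hb.sixteen_le_rpow (topDiffBit i (i + 1))]

open Set

theorem strictMonoOn_Iio_of_lt_add_one {β : Type*} [Preorder β] {f : ℕ → β} {r : ℕ}
    (h : ∀ i, i + 1 < r → f i < f (i + 1)) : StrictMonoOn f (Iio r) :=
  strictMonoOn_of_lt_add_one ordConnected_Iio fun i _ _ hi => h i hi

theorem StrictMonoOn.lt_of_lt_Iio {β : Type*} [Preorder β] {f : ℕ → β} {n i j : ℕ}
    (hf : StrictMonoOn f (Iio n)) (hij : i < j) (hjn : j < n) : f i < f j :=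
  hf (hij.trans hjn) hjn hij

theorem StrictMonoOn.le_of_le_Iio {β : Type*} [Preorder β] {f : ℕ → β} {n i j : ℕ}
    (hf : StrictMonoOn f (Iio n)) (hij : i ≤ j) (hjn : j < n) : f i ≤ f j :=
  hf.monotoneOn (hij.trans_lt hjn) hjn hij

theorem StrictMonoOn.mapsTo_Iio_of_lt {β : Type*} [Preorder β] {f : ℕ → β} {r : ℕ} {c : β}
    (hf : StrictMonoOn f (Iio (r + 1))) (h : f r < c) : MapsTo f (Iio (r + 1)) (Iio c) :=
  fun _ hj => (hf.le_of_le_Iio (Nat.le_of_lt_succ hj) (lt_add_one r)).trans_lt h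

def topDiffBitSeq (u : ℕ → ℕ) (t : ℕ) : ℕ := topDiffBit (u t) (u (t + 1))

section Runs

variable {u : ℕ → ℕ} {n : ℕ} (hu : StrictMonoOn u (Iio n))
include hu

theorem topDiffBit_eq_of_strictMonoOn {i j : ℕ} (hjn : j + 1 < n) (hij : i ≤ j)
    (hv : StrictMonoOn (topDiffBitSeq u) (Icc i j)) :
    topDiffBit (u i) (u (j + 1)) = topDiffBitSeq u j := by
  induction j, hij using Nat.le_induction with
  | base => rfl
  | succ j hij ih =>
    rw [topDiffBit_eq_max (y := u (j + 1)) (hu.lt_of_lt_Iio (by omega) (by omega))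
        (hu.lt_of_lt_Iio (by omega) (by omega)),
      ih (by omega) (hv.mono (Icc_subset_Icc_right j.le_succ))]
    exact max_eq_right (hv ⟨hij, j.le_succ⟩ ⟨by omega, le_rfl⟩ (lt_add_one j)).le

theorem topDiffBit_eq_of_strictAntiOn {i j : ℕ} (hjn : j + 1 < n) (hij : i ≤ j)
    (hv : StrictAntiOn (topDiffBitSeq u) (Icc i j)) :
    topDiffBit (u i) (u (j + 1)) = topDiffBitSeq u i := by
  induction j, hij using Nat.le_induction with
  | base => rfl
  | succ j hij ih =>
    rw [topDiffBit_eq_max (y := u (j + 1)) (hu.lt_of_lt_Iio (by omega) (by omega))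
        (hu.lt_of_lt_Iio (by omega) (by omega)),
      ih (by omega) (hv.mono (Icc_subset_Icc_right j.le_succ))]
    exact max_eq_left (hv ⟨le_rfl, by omega⟩ ⟨by omega, le_rfl⟩ (by omega)).le

variable {a n₀ r : ℕ} (han : a + n₀ < n) {s : ℕ → ℕ} (hs : StrictMonoOn s (Iio (r + 1)))
  (hsn : s r < n₀)
include han hs hsn

theorem exists_tuple_of_strictMonoOn (hrun : StrictMonoOn (topDiffBitSeq u) (Ico a (a + n₀))) :
    ∃ pt : ℕ → ℕ, StrictMonoOn pt (Iio (r + 2)) ∧ pt (r + 1) < n ∧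
      ∀ j < r + 1, topDiffBitSeq (u ∘ pt) j = topDiffBitSeq u (a + s j) := by
  have hs_lt : ∀ j < r + 1, s j < n₀ := fun _ hj => hs.mapsTo_Iio_of_lt hsn hj
  set pt : ℕ → ℕ := fun j => if j = 0 then a else a + s (j - 1) + 1
  have hpt_succ : ∀ j, pt (j + 1) = a + s j + 1 := fun j => by simp [pt]
  have hpt_le : ∀ j < r + 1, a ≤ pt j ∧ pt j ≤ a + s j := fun j hj => by
    rcases j with _ | j
    · simp [pt]
    · have := hs.lt_of_lt_Iio (lt_add_one j) hj
      rw [hpt_succ]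
      omega
  refine ⟨pt, strictMonoOn_Iio_of_lt_add_one fun j hj => ?_, ?_, fun j hj => ?_⟩
  · have := hpt_le j (by omega)
    rw [hpt_succ]
    omega
  · have := hs_lt r (lt_add_one r)
    rw [hpt_succ]
    omega
  · have := hs_lt j hj
    have hδ := topDiffBit_eq_of_strictMonoOn hu (by omega) (hpt_le j hj).2
      (hrun.mono fun t ht => ⟨(hpt_le j hj).1.trans ht.1, by have := ht.2; omega⟩)
    rwa [← hpt_succ] at hδ

theorem exists_tuple_of_strictAntiOn (hrun : StrictAntiOn (topDiffBitSeq u) (Ico a (a + n₀))) :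
    ∃ pt : ℕ → ℕ, StrictMonoOn pt (Iio (r + 2)) ∧ pt (r + 1) < n ∧
      ∀ j < r + 1, topDiffBitSeq (u ∘ pt) j = topDiffBitSeq u (a + n₀ - 1 - s (r - j)) := by
  have hs_lt : ∀ j < r + 1, s j < n₀ := fun _ hj => hs.mapsTo_Iio_of_lt hsn hj
  set pt : ℕ → ℕ := fun j => if j = r + 1 then a + n₀ else a + n₀ - 1 - s (r - j)
  have hpt_last : pt (r + 1) = a + n₀ := by simp [pt]
  have hpt_of_le : ∀ j ≤ r, pt j = a + n₀ - 1 - s (r - j) := fun j hj => by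
    simp [pt, show j ≠ r + 1 by omega]
  have hpt_mem : ∀ j ≤ r + 1, a ≤ pt j ∧ pt j ≤ a + n₀ := fun j hj => by
    rcases Nat.lt_or_ge j (r + 1) with h | h
    · have := hs_lt (r - j) (by omega)
      rw [hpt_of_le j (by omega)]
      omega
    · rw [show j = r + 1 by omega, hpt_last]
      omega
  have hpt : StrictMonoOn pt (Iio (r + 2)) := strictMonoOn_Iio_of_lt_add_one fun j hj => by
    have := hs_lt (r - j) (by omega)
    rw [hpt_of_le j (by omega)]
    rcases Nat.lt_or_ge j r with h | h
    · have := hs.lt_of_lt_Iio (show r - (j + 1) < r - j by omega) (by omega)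
      rw [hpt_of_le (j + 1) h]
      omega
    · rw [show j + 1 = r + 1 by omega, hpt_last]
      omega
  refine ⟨pt, hpt, by omega, fun j hj => ?_⟩
  have hlt := hpt.lt_of_lt_Iio (lt_add_one j) (by omega)
  have hmem := hpt_mem (j + 1) (by omega)
  have hδ := topDiffBit_eq_of_strictAntiOn hu (i := pt j) (j := pt (j + 1) - 1) (by omega)
    (by omega) (hrun.mono fun t ht => ⟨(hpt_mem j (by omega)).1.trans ht.1, by have := ht.2; omega⟩)
  rw [Nat.sub_add_cancel (by omega)] at hδ
  rw [← hpt_of_le j (by omega)]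
  exact hδ

end Runs

theorem exists_strictMonoOn_or_strictAntiOn {α : Type*} [LinearOrder α] {v : ℕ → α} {n : ℕ}
    (hne : ∀ t, t + 1 < 2 * n → v t ≠ v (t + 1))
    (hup : ∀ t, t + 2 < 2 * n → v t < v (t + 1) → v (t + 1) < v (t + 2)) :
    ∃ a, a + n ≤ 2 * n ∧ (StrictMonoOn v (Ico a (a + n)) ∨ StrictAntiOn v (Ico a (a + n))) := by
  by_cases h : ∃ a, a + 1 < n ∧ v a < v (a + 1)
  · obtain ⟨a, ha, hlt⟩ := h
    have hinc : ∀ t, a ≤ t → t + 1 < 2 * n → v t < v (t + 1) := by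
      intro t hat ht
      induction t, hat using Nat.le_induction with
      | base => exact hlt
      | succ t _ ih => exact hup t (by omega) (ih (by omega))
    refine ⟨a, by omega, Or.inl (strictMonoOn_of_lt_add_one ordConnected_Ico fun t _ ht ht' => ?_)⟩
    exact hinc t ht.1 (by have := ht'.2; omega)
  · push Not at h
    refine ⟨0, by omega, Or.inr (strictAntiOn_of_add_one_lt ordConnected_Ico fun t _ _ ht' => ?_)⟩
    have := ht'.2
    exact lt_of_le_of_ne (h t (by omega)) (hne t (by omega)).symm

def IsRobust (k : ℕ) (b : ℕ → ℝ) : Prop :=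
  ∀ q : ℕ → ℕ, StrictMonoOn q (Iio (k + 3)) → ∀ y : ℕ → ℝ, (∀ j < k + 3, |y j - b (q j)| < 1) →
    (EAux k y ↔ EAux k (b ∘ q))

/-- `E_{k+4}` on a tuple of `stepUp b` whose consecutive top differing bits are `p 0, p 1, …`
(see `IsRobust.eAux_succ_iff`). -/
def stepPattern (k : ℕ) (b : ℕ → ℝ) (p : ℕ → ℕ) : Prop :=
  ((∀ i < k + 2, p i < p (i + 1)) ∧ EAux k (b ∘ p)) ∨
    ((∀ i < k + 2, p (i + 1) < p i) ∧ EAux k fun j => b (p (k + 2 - j))) ∨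
    (p 0 < p 1 ∧ p 2 < p 1)

section Pattern

variable {k : ℕ} {b : ℕ → ℝ} {p : ℕ → ℕ}

theorem stepPattern_iff_of_lt (hp : ∀ i < k + 2, p i < p (i + 1)) :
    stepPattern k b p ↔ EAux k (b ∘ p) := by
  refine ⟨?_, fun h => Or.inl ⟨hp, h⟩⟩
  rintro (⟨-, h⟩ | ⟨h, -⟩ | ⟨-, h⟩)
  · exact h
  · exact absurd (h 0 (by omega)) (hp 0 (by omega)).asymm
  · exact absurd h (hp 1 (by omega)).asymm

theorem stepPattern_iff_of_gt (hp : ∀ i < k + 2, p (i + 1) < p i) :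
    stepPattern k b p ↔ EAux k fun j => b (p (k + 2 - j)) := by
  refine ⟨?_, fun h => Or.inr (Or.inl ⟨hp, h⟩)⟩
  rintro (⟨h, -⟩ | ⟨-, h⟩ | ⟨h, -⟩)
  · exact absurd (h 0 (by omega)) (hp 0 (by omega)).asymm
  · exact h
  · exact absurd h (hp 0 (by omega)).asymm

theorem not_stepPattern_of_gt_of_lt (h₀ : p 1 < p 0) (h₂ : p 1 < p 2) : ¬ stepPattern k b p := by
  rintro (⟨h, -⟩ | ⟨h, -⟩ | ⟨h, -⟩)
  · exact (h 0 (by omega)).asymm h₀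
  · exact (h 1 (by omega)).asymm h₂
  · exact h.asymm h₀

end Pattern

namespace IsGapped

variable {b : ℕ → ℝ} (hb : IsGapped b) {r : ℕ} {q : ℕ → ℕ} (hq : StrictMonoOn q (Iio r))
  {y : ℕ → ℝ} (hy : ∀ j < r, |y j - stepUp b (q j)| < 1)
include hb hq hy

theorem sub_lt_sub_iff {i : ℕ} (hi : i + 2 < r) :
    (y (i + 1) - y i < y (i + 2) - y (i + 1) ↔ topDiffBitSeq q i < topDiffBitSeq q (i + 1)) ∧
      (y (i + 2) - y (i + 1) < y (i + 1) - y i ↔ topDiffBitSeq q (i + 1) < topDiffBitSeq q i) := by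
  have hq₁ : q i < q (i + 1) := hq.lt_of_lt_Iio (by omega) (by omega)
  have hq₂ : q (i + 1) < q (i + 2) := hq.lt_of_lt_Iio (by omega) (by omega)
  have h₀ := abs_lt.1 (hy i (by omega))
  have h₁ := abs_lt.1 (hy (i + 1) (by omega))
  have h₂ := abs_lt.1 (hy (i + 2) (by omega))
  rcases lt_or_gt_of_ne (topDiffBit_ne_topDiffBit hq₁ hq₂) with h | h
  · have := hb.stepUp_sub_add_four_lt hq₁ hq₂ h
    exact ⟨iff_of_true (by linarith) h, iff_of_false (by linarith) h.asymm⟩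
  · have := hb.stepUp_sub_add_four_lt' hq₁ hq₂ h
    exact ⟨iff_of_false (by linarith) h.asymm, iff_of_true (by linarith) h⟩

theorem abs_log2'_sub_topDiffBitSeq_lt {j : ℕ} (hj : j + 1 < r) :
    |log2' (y (j + 1) - y j) - b (topDiffBitSeq q j)| < 1 := by
  refine hb.abs_log2'_sub_lt (hq.lt_of_lt_Iio (by omega) (by omega)) ?_
  have h₀ := abs_lt.1 (hy j (by omega))
  have h₁ := abs_lt.1 (hy (j + 1) (by omega))
  exact abs_le.2 ⟨by linarith, by linarith⟩

end IsGapped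

theorem IsGapped.eAux_zero_iff {b : ℕ → ℝ} (hb : IsGapped b) {q : ℕ → ℕ}
    (hq : StrictMonoOn q (Iio 3)) {y : ℕ → ℝ} (hy : ∀ j < 3, |y j - stepUp b (q j)| < 1) :
    EAux 0 y ↔ topDiffBitSeq q 0 < topDiffBitSeq q 1 := by
  obtain ⟨h₁, h₂⟩ := hb.sub_lt_sub_iff hq hy (i := 0) (by omega)
  have hne : topDiffBitSeq q 0 ≠ topDiffBitSeq q 1 :=
    topDiffBit_ne_topDiffBit (hq.lt_of_lt_Iio (lt_add_one 0) (by omega))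
      (hq.lt_of_lt_Iio (lt_add_one 1) (by omega))
  change 0 ≤ y 0 + y 2 - 2 * y 1 ↔ _
  rcases lt_or_gt_of_ne hne with h | h
  · exact iff_of_true (by linarith [h₁.2 h]) h
  · exact iff_of_false (by linarith [h₂.2 h]) h.asymm

theorem IsGapped.isRobust_stepUp_zero {b : ℕ → ℝ} (hb : IsGapped b) : IsRobust 0 (stepUp b) :=
  fun q hq y hy => by
    rw [hb.eAux_zero_iff hq hy, hb.eAux_zero_iff hq fun j _ => by simp]

theorem IsRobust.eAux_succ_iff {k : ℕ} {b : ℕ → ℝ} (hrob : IsRobust k b) (hb : IsGapped b)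
    {q : ℕ → ℕ} (hq : StrictMonoOn q (Iio (k + 4))) {y : ℕ → ℝ}
    (hy : ∀ j < k + 4, |y j - stepUp b (q j)| < 1) :
    EAux (k + 1) y ↔ stepPattern k b (topDiffBitSeq q) := by
  have hcmp : ∀ i < k + 2, _ := fun i hi => hb.sub_lt_sub_iff hq hy (i := i) (by omega)
  have hlog : ∀ j < k + 3, _ := fun j hj =>
    hb.abs_log2'_sub_topDiffBitSeq_lt hq hy (j := j) (by omega)
  refine or_congr ?_ (or_congr ?_ (and_congr (hcmp 0 (by omega)).1 (hcmp 1 (by omega)).2))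
  · rw [forall₂_congr fun i hi => (hcmp i hi).1]
    exact and_congr_right fun hp =>
      hrob _ (strictMonoOn_Iio_of_lt_add_one fun i hi => hp i (by omega)) _ hlog
  · rw [forall₂_congr fun i hi => (hcmp i hi).2]
    refine and_congr_right fun hp => hrob (fun j => topDiffBitSeq q (k + 2 - j))
      (strictMonoOn_Iio_of_lt_add_one fun i hi => ?_) _ fun j hj => ?_
    · simpa [show k + 2 - i = k + 2 - (i + 1) + 1 by omega] using hp (k + 2 - (i + 1)) (by omega)
    · simpa [show k + 3 - j = k + 2 - j + 1 by omega] using hlog (k + 2 - j) (by omega)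

theorem isRobust_stepUp {k : ℕ} {b : ℕ → ℝ} (hrob : IsRobust k b) (hb : IsGapped b) :
    IsRobust (k + 1) (stepUp b) := fun q hq y hy => by
  rw [hrob.eAux_succ_iff hb hq hy, hrob.eAux_succ_iff hb hq fun j _ => by simp]

/-- The first `n` terms of `x` are not `E_{k+3}`-indiscernible: `c` ranges over both truth
values. -/
def IsMixed (k : ℕ) (x : ℕ → ℝ) (n : ℕ) : Prop :=
  ∀ c : Bool, ∃ s : ℕ → ℕ, StrictMonoOn s (Iio (k + 3)) ∧ s (k + 2) < n ∧ (EAux k (x ∘ s) ↔ c)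

def HasNoIndiscernible (k : ℕ) (b : ℕ → ℝ) (m n : ℕ) : Prop :=
  ∀ u : ℕ → ℕ, StrictMonoOn u (Iio n) → (∀ j < n, u j < m) → IsMixed k (b ∘ u) n

section StepUp

variable {k m n₀ n : ℕ} {b : ℕ → ℝ} (hrob : IsRobust k b) (hb : IsGapped b)
  (hav : HasNoIndiscernible k b m n₀) {u : ℕ → ℕ} (hu : StrictMonoOn u (Iio n))
  (hum : ∀ j < n, u j < 2 ^ m) {a : ℕ} (han : a + n₀ < n)
include hrob hb hav hu hum han

theorem IsRobust.isMixed_of_strictMonoOn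
    (hrun : StrictMonoOn (topDiffBitSeq u) (Ico a (a + n₀))) :
    IsMixed (k + 1) (stepUp b ∘ u) n := by
  intro c
  have hw : StrictMonoOn (fun j => topDiffBitSeq u (a + j)) (Iio n₀) :=
    fun i (hi : i < n₀) j (hj : j < n₀) hij =>
      hrun ⟨by omega, by omega⟩ ⟨by omega, by omega⟩ (by omega)
  obtain ⟨s, hs, hsn, hc⟩ := hav _ hw (fun j hj => topDiffBit_lt_of_lt_two_pow
    (hu.lt_of_lt_Iio (lt_add_one _) (by omega)).ne (hum _ (by omega)) (hum _ (by omega))) c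
  obtain ⟨pt, hpt, hptn, hδ⟩ := exists_tuple_of_strictMonoOn hu han hs hsn hrun
  have hs_lt := hs.mapsTo_Iio_of_lt hsn
  refine ⟨pt, hpt, hptn, ?_⟩
  rw [← hc, hrob.eAux_succ_iff hb (hu.comp hpt (hpt.mapsTo_Iio_of_lt hptn)) fun j _ => by simp,
    stepPattern_iff_of_lt fun i hi => ?_]
  · exact eAux_congr k fun j hj => by simp [hδ j hj]
  · rw [hδ i (by omega), hδ (i + 1) (by omega)]
    exact hw (hs_lt (mem_Iio.2 (by omega))) (hs_lt (mem_Iio.2 (by omega)))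
      (hs.lt_of_lt_Iio (lt_add_one i) (by omega))

theorem IsRobust.isMixed_of_strictAntiOn
    (hrun : StrictAntiOn (topDiffBitSeq u) (Ico a (a + n₀))) :
    IsMixed (k + 1) (stepUp b ∘ u) n := by
  intro c
  have hw : StrictMonoOn (fun j => topDiffBitSeq u (a + n₀ - 1 - j)) (Iio n₀) :=
    fun i (hi : i < n₀) j (hj : j < n₀) hij =>
      hrun ⟨by omega, by omega⟩ ⟨by omega, by omega⟩ (by omega)
  obtain ⟨s, hs, hsn, hc⟩ := hav _ hw (fun j hj => topDiffBit_lt_of_lt_two_pow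
    (hu.lt_of_lt_Iio (lt_add_one _) (by omega)).ne (hum _ (by omega)) (hum _ (by omega))) c
  obtain ⟨pt, hpt, hptn, hδ⟩ := exists_tuple_of_strictAntiOn hu han hs hsn hrun
  have hs_lt := hs.mapsTo_Iio_of_lt hsn
  refine ⟨pt, hpt, hptn, ?_⟩
  rw [← hc, hrob.eAux_succ_iff hb (hu.comp hpt (hpt.mapsTo_Iio_of_lt hptn)) fun j _ => by simp,
    stepPattern_iff_of_gt fun i hi => ?_]
  · refine eAux_congr k fun j hj => ?_
    simp [hδ (k + 2 - j) (by omega), Nat.sub_sub_self (by omega : j ≤ k + 2)]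
  · rw [hδ i (by omega), hδ (i + 1) (by omega)]
    exact hw (hs_lt (mem_Iio.2 (by omega))) (hs_lt (mem_Iio.2 (by omega)))
      (hs.lt_of_lt_Iio (by omega) (by omega))

end StepUp

/-- A peak of the top differing bits makes the third clause of `E_{k+4}` true on the
`k + 4` consecutive terms starting there; a valley makes all three clauses false. -/
theorem IsRobust.isMixed_of_peak_of_valley {k n : ℕ} {b : ℕ → ℝ} (hrob : IsRobust k b)
    (hb : IsGapped b) {u : ℕ → ℕ} (hu : StrictMonoOn u (Iio n)) {t t' : ℕ}
    (ht : t + k + 3 < n) (hpeak₀ : topDiffBitSeq u t < topDiffBitSeq u (t + 1))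
    (hpeak₂ : topDiffBitSeq u (t + 2) < topDiffBitSeq u (t + 1)) (ht' : t' + k + 3 < n)
    (hvalley₀ : topDiffBitSeq u (t' + 1) < topDiffBitSeq u t')
    (hvalley₂ : topDiffBitSeq u (t' + 1) < topDiffBitSeq u (t' + 2)) :
    IsMixed (k + 1) (stepUp b ∘ u) n := by
  have hshift : ∀ t, t + k + 3 < n → (EAux (k + 1) (stepUp b ∘ u ∘ (t + ·)) ↔
      stepPattern k b fun j => topDiffBitSeq u (t + j)) := fun t ht =>
    hrob.eAux_succ_iff hb (hu.comp ((strictMono_id.const_add t).strictMonoOn _)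
      fun j (hj : j < _) => show t + j < n by omega) fun j _ => by simp
  rintro (_ | _)
  · exact ⟨(t' + ·), (strictMono_id.const_add t').strictMonoOn _, by dsimp only; omega,
      (hshift t' ht').trans (iff_of_false (not_stepPattern_of_gt_of_lt hvalley₀ hvalley₂)
        Bool.false_ne_true)⟩
  · exact ⟨(t + ·), (strictMono_id.const_add t).strictMonoOn _, by dsimp only; omega,
      (hshift t ht).trans (iff_of_true (Or.inr (Or.inr ⟨hpeak₀, hpeak₂⟩)) rfl)⟩

theorem IsRobust.hasNoIndiscernible_stepUp {k m n₀ n : ℕ} {b : ℕ → ℝ} (hrob : IsRobust k b)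
    (hb : IsGapped b) (hav : HasNoIndiscernible k b m n₀) (hn : 2 * n₀ + k + 1 ≤ n) :
    HasNoIndiscernible (k + 1) (stepUp b) (2 ^ m) n := by
  intro u hu hum
  set v := topDiffBitSeq u
  have hne : ∀ t, t + 1 < 2 * n₀ → v t ≠ v (t + 1) := fun t ht =>
    topDiffBit_ne_topDiffBit (hu.lt_of_lt_Iio (lt_add_one t) (by omega))
      (hu.lt_of_lt_Iio (lt_add_one _) (by omega))
  have hrun : ∀ a, a + n₀ ≤ 2 * n₀ →
      StrictMonoOn v (Ico a (a + n₀)) ∨ StrictAntiOn v (Ico a (a + n₀)) →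
        IsMixed (k + 1) (stepUp b ∘ u) n := by
    rintro a ha (h | h)
    exacts [hrob.isMixed_of_strictMonoOn hb hav hu hum (by omega) h,
      hrob.isMixed_of_strictAntiOn hb hav hu hum (by omega) h]
  by_cases hup : ∀ t, t + 2 < 2 * n₀ → v t < v (t + 1) → v (t + 1) < v (t + 2)
  · obtain ⟨a, ha, h⟩ := exists_strictMonoOn_or_strictAntiOn hne hup
    exact hrun a ha h
  by_cases hdown : ∀ t, t + 2 < 2 * n₀ → v (t + 1) < v t → v (t + 2) < v (t + 1)
  · obtain ⟨a, ha, h⟩ := exists_strictMonoOn_or_strictAntiOn (v := OrderDual.toDual ∘ v)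
      (fun t ht => by simpa using hne t ht) (fun t ht => by simpa using hdown t ht)
    rw [strictMonoOn_toDual_comp_iff, strictAntiOn_toDual_comp_iff, or_comm] at h
    exact hrun a ha h
  push Not at hup hdown
  obtain ⟨t, ht, hpeak₀, hpeak₂⟩ := hup
  obtain ⟨t', ht', hvalley₀, hvalley₂⟩ := hdown
  exact hrob.isMixed_of_peak_of_valley hb hu (by omega) hpeak₀
    (lt_of_le_of_ne hpeak₂ (hne (t + 1) (by omega)).symm) (by omega) hvalley₀
    (lt_of_le_of_ne hvalley₂ (hne (t' + 1) (by omega)))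

theorem not_injOn_Iic_of_forall_lt {v : ℕ → ℕ} {L : ℕ} (h : ∀ t ≤ L, v t < L) :
    ¬ InjOn v (Iic L) := fun hinj => by
  have := Finset.card_le_card_of_injOn v (s := Finset.Iic L) (t := Finset.range L)
    (fun t ht => by simpa using h t (by simpa using ht)) (by simpa using hinj)
  simp at this

theorem IsGapped.hasNoIndiscernible_stepUp_zero {b : ℕ → ℝ} (hb : IsGapped b) {n : ℕ}
    (hn : 2 ≤ n) : HasNoIndiscernible 0 (stepUp b) (2 ^ (n - 2)) n := by
  intro u hu hum
  set v := topDiffBitSeq u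
  have hlt : ∀ t ≤ n - 2, v t < n - 2 := fun t ht =>
    topDiffBit_lt_of_lt_two_pow (hu.lt_of_lt_Iio (lt_add_one t) (by omega)).ne
      (hum t (by omega)) (hum (t + 1) (by omega))
  have hne : ∀ t, t + 2 < n → v t ≠ v (t + 1) := fun t ht =>
    topDiffBit_ne_topDiffBit (hu.lt_of_lt_Iio (lt_add_one t) (by omega))
      (hu.lt_of_lt_Iio (lt_add_one _) (by omega))
  have htuple : ∀ t, t + 2 < n → ∃ s : ℕ → ℕ, StrictMonoOn s (Iio 3) ∧ s 2 < n ∧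
      (EAux 0 (stepUp b ∘ u ∘ s) ↔ v t < v (t + 1)) :=
    fun t ht => ⟨(t + ·), (strictMono_id.const_add t).strictMonoOn _, by dsimp only; omega,
      hb.eAux_zero_iff (hu.comp ((strictMono_id.const_add t).strictMonoOn _)
        fun j (hj : j < _) => show t + j < n by omega) fun j _ => by simp⟩
  -- the `n - 1` deltas take values below `n - 2`, so they are not monotone throughout
  rintro (_ | _)
  · obtain ⟨t, ht, hge⟩ : ∃ t, t + 2 < n ∧ ¬ v t < v (t + 1) := by
      by_contra! h
      exact not_injOn_Iic_of_forall_lt hlt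
        (strictMonoOn_Iic_of_lt_succ fun t ht => h t (by omega)).injOn
    obtain ⟨s, hs, hsn, hE⟩ := htuple t ht
    exact ⟨s, hs, hsn, hE.trans (iff_of_false hge Bool.false_ne_true)⟩
  · obtain ⟨t, ht, hlt⟩ : ∃ t, t + 2 < n ∧ v t < v (t + 1) := by
      by_contra! h
      exact not_injOn_Iic_of_forall_lt hlt (strictAntiOn_Iic_of_succ_lt fun t ht =>
        lt_of_le_of_ne (h t (by omega)) (hne t (by omega)).symm).injOn
    obtain ⟨s, hs, hsn, hE⟩ := htuple t ht
    exact ⟨s, hs, hsn, hE.trans (iff_of_true hlt rfl)⟩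

theorem eTower_monotone (k : ℕ) : Monotone (eTower k) := by
  induction k with
  | zero => exact monotone_id
  | succ k ih => exact fun x y h => Real.rpow_le_rpow_of_exponent_le one_le_two (ih h)

theorem exists_hasNoIndiscernible (k : ℕ) : ∃ c : ℝ, 0 < c ∧ ∃ N₀ : ℕ, ∀ n, N₀ ≤ n →
    ∃ (m : ℕ) (b : ℕ → ℝ), IsGapped b ∧ IsRobust k b ∧ HasNoIndiscernible k b m n ∧
      eTower (k + 1) (c * n) ≤ m := by
  induction k with
  | zero =>
    have hb : IsGapped fun t : ℕ => 2 * (t : ℝ) + 4 := ⟨by simp, fun i => by push_cast; linarith⟩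
    refine ⟨1 / 2, by norm_num, 4, fun n hn => ⟨2 ^ (n - 2), _, isGapped_stepUp hb,
      hb.isRobust_stepUp_zero, hb.hasNoIndiscernible_stepUp_zero (by omega), ?_⟩⟩
    calc eTower 1 (1 / 2 * n) = 2 ^ (1 / 2 * (n : ℝ)) := rfl
      _ ≤ 2 ^ ((n - 2 : ℕ) : ℝ) := by
        refine Real.rpow_le_rpow_of_exponent_le one_le_two ?_
        rw [Nat.cast_sub (by omega)]
        linarith [(show (4 : ℝ) ≤ n by exact_mod_cast hn)]
      _ = _ := by norm_cast
  | succ k ih =>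
    obtain ⟨c, hc, N₀, hN₀⟩ := ih
    refine ⟨c / 4, by positivity, 2 * N₀ + 2 * k + 4, fun n hn => ?_⟩
    obtain ⟨m, b, hb, hrob, hav, hm⟩ := hN₀ ((n - k - 1) / 2) (by omega)
    refine ⟨2 ^ m, stepUp b, isGapped_stepUp hb, isRobust_stepUp hrob hb,
      hrob.hasNoIndiscernible_stepUp hb hav (by omega), ?_⟩
    have hn₀ : (n : ℝ) ≤ 4 * ((n - k - 1) / 2 : ℕ) := by exact_mod_cast (by omega : n ≤ _)
    calc eTower (k + 2) (c / 4 * n) = 2 ^ eTower (k + 1) (c / 4 * n) := rfl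
      _ ≤ 2 ^ (m : ℝ) := Real.rpow_le_rpow_of_exponent_le one_le_two
        ((eTower_monotone _ (by nlinarith)).trans hm)
      _ = _ := by norm_cast

theorem HasNoIndiscernible.not_isIndiscernible {k m n N : ℕ} {b : ℕ → ℝ}
    (h : HasNoIndiscernible k b m n) (hN : N ≤ m) {t : Fin n → Fin N} (ht : StrictMono t) :
    ¬ IsIndiscernible (ERel k) ((fun i : Fin N => b i) ∘ t) := by
  set u : ℕ → ℕ := fun j => if hj : j < n then t ⟨j, hj⟩ else 0
  have hu : StrictMonoOn u (Iio n) := fun i hi j hj hij => by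
    simp only [mem_Iio] at hi hj
    simpa [u, hi, hj] using ht (Fin.mk_lt_mk.2 hij)
  have hum : ∀ j < n, u j < m := fun j hj => by simp only [u, dif_pos hj]; omega
  have htuple : ∀ c : Bool, ∃ s : Fin (k + 3) → Fin n, StrictMono s ∧
      (ERel k ((fun i : Fin N => b i) ∘ t ∘ s) ↔ c) := fun c => by
    obtain ⟨s, hs, hsn, hc⟩ := h u hu hum c
    have hlt : ∀ j < k + 3, s j < n := fun _ hj => hs.mapsTo_Iio_of_lt hsn hj
    refine ⟨fun j => ⟨s j, hlt j j.2⟩, fun i j hij => hs i.2 j.2 hij, ?_⟩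
    rw [← hc, ERel]
    exact eAux_congr k fun j hj => by simp [hj, u, hlt j hj]
  rintro (hall | hnone)
  · obtain ⟨s, hs, hc⟩ := htuple false
    exact absurd (hc.1 (hall s hs)) Bool.false_ne_true
  · obtain ⟨s, hs, hc⟩ := htuple true
    exact hnone s hs (hc.2 rfl)

/-- For every `k ≥ 3` (here `k + 3`) there is `c > 0` such that for all sufficiently large `n`
there is a sequence of reals of length at least `e_{k-2}(c·n)` with no `E_k`-indiscernible
subsequence of length `n`; consequently any `N` such that every length-`N` sequence contains
an `E_k`-indiscernible subsequence of length `n` satisfies `N ≥ e_{k-2}(c·n)`. -/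
theorem erel_ramsey_lower_bound (k : ℕ) :
    ∃ c : ℝ, 0 < c ∧ ∃ N₀ : ℕ, ∀ n : ℕ, N₀ ≤ n →
      (∃ (m : ℕ) (a : Fin m → ℝ), eTower (k + 1) (c * n) ≤ (m : ℝ) ∧
        ¬ ∃ t : Fin n → Fin m, StrictMono t ∧ IsIndiscernible (ERel k) (a ∘ t)) ∧
      (∀ N : ℕ, (∀ a : Fin N → ℝ,
          ∃ t : Fin n → Fin N, StrictMono t ∧ IsIndiscernible (ERel k) (a ∘ t)) →
        eTower (k + 1) (c * n) ≤ (N : ℝ)) := by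
  obtain ⟨c, hc, N₀, hN₀⟩ := exists_hasNoIndiscernible k
  refine ⟨c, hc, N₀, fun n hn => ?_⟩
  obtain ⟨m, b, -, -, hav, hm⟩ := hN₀ n hn
  refine ⟨⟨m, fun i => b i, hm, fun ⟨t, ht, hind⟩ => hav.not_isIndiscernible le_rfl ht hind⟩,
    fun N hN => ?_⟩
  by_contra! hlt
  obtain ⟨t, ht, hind⟩ := hN fun i => b i
  exact hav.not_isIndiscernible (by exact_mod_cast (hlt.trans_le hm).le) ht hind
end

section
/- For every real number c with 0 < c < 1 there is N₀ ∈ ℕ such that for all n ≥ N₀ there exists a set X ⊆ {1, 2, …, 2ⁿ} with |X| ≥ 2^{c·n} that contains no nontrivial three-term arithmetic progression, i.e. there are no a, b, d ∈ X with a < b < d and a + d = 2b. -/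
open Real Finset

/-- Consequence of Behrend's theorem: for every `0 < c < 1`, for all sufficiently large `n`
there is a subset of `{1,…,2ⁿ}` of size at least `2^(c·n)` with no nontrivial three-term
arithmetic progression. -/
theorem behrend_consequence (c : ℝ) (hc0 : 0 < c) (hc1 : c < 1) :
    ∃ N₀ : ℕ, ∀ n : ℕ, N₀ ≤ n →
      ∃ X : Finset ℕ, X ⊆ Finset.Icc 1 (2 ^ n) ∧ (2 : ℝ) ^ (c * n) ≤ (X.card : ℝ) ∧
        ∀ a ∈ X, ∀ b ∈ X, ∀ d ∈ X, a < b → b < d → a + d ≠ 2 * b := by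
  have hlog2 : (0 : ℝ) < Real.log 2 := Real.log_pos (by norm_num)
  refine ⟨max 12 (⌈16 / ((1 - c) ^ 2 * Real.log 2)⌉₊ + 1), fun n hn => ?_⟩
  have h12 : 12 ≤ n := le_trans (le_max_left _ _) hn
  have hN : 4096 ≤ 2 ^ n := by
    calc (4096 : ℕ) = 2 ^ 12 := by norm_num
    _ ≤ 2 ^ n := Nat.pow_le_pow_right (by norm_num) h12
  -- addRothNumber on Icc 1 (2^n)
  have hIcc : Finset.Icc 1 (2 ^ n) = Finset.Ico 1 (2 ^ n + 1) := by
    rw [Finset.Ico_add_one_right_eq_Icc]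
  obtain ⟨X, hXsub, hXcard, hXfree⟩ := addRothNumber_spec (Finset.Icc 1 (2 ^ n))
  refine ⟨X, hXsub, ?_, ?_⟩
  · -- cardinality bound
    have hroth : addRothNumber (Finset.Icc 1 (2 ^ n)) = rothNumberNat (2 ^ n) := by
      rw [hIcc, addRothNumber_Ico, Nat.add_sub_cancel]
    rw [hXcard, hroth]
    have hlb := Behrend.roth_lower_bound_explicit hN
    have hcast : ((2 ^ n : ℕ) : ℝ) = (2 : ℝ) ^ (n : ℝ) := by
      push_cast; rw [Real.rpow_natCast]
    refine le_trans ?_ hlb.le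
    rw [hcast, Real.log_rpow (by norm_num)]
    have hx : (0 : ℝ) < (n : ℝ) * Real.log 2 := by
      have : (0:ℝ) < n := by positivity
      positivity
    -- need : 2^(cn) ≤ 2^n * exp(-4 √(n log 2))
    rw [show (2:ℝ) ^ (c * n) = Real.exp (c * n * Real.log 2) by
          rw [Real.rpow_def_of_pos (by norm_num)]; ring_nf,
        show (2:ℝ) ^ (n:ℝ) = Real.exp (n * Real.log 2) by
          rw [Real.rpow_def_of_pos (by norm_num)]; ring_nf,
        ← Real.exp_add, Real.exp_le_exp]
    have key : 4 * Real.sqrt ((n : ℝ) * Real.log 2) ≤ (1 - c) * ((n : ℝ) * Real.log 2) := by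
      have hnlb : 16 / ((1 - c) ^ 2 * Real.log 2) ≤ (n : ℝ) := by
        have h1 : (⌈16 / ((1 - c) ^ 2 * Real.log 2)⌉₊ : ℝ) ≤ n := by
          exact_mod_cast Nat.cast_le.2 (le_trans (Nat.le_succ _) (le_trans (le_max_right _ _) hn))
        exact le_trans (Nat.le_ceil _) h1
      have h1c : (0:ℝ) < 1 - c := by linarith
      have hx16 : 16 / (1 - c) ^ 2 ≤ (n : ℝ) * Real.log 2 := by
        rw [div_le_iff₀ (by positivity)] at hnlb ⊢
        nlinarith
      have hs : 4 / (1 - c) ≤ Real.sqrt ((n : ℝ) * Real.log 2) := by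
        have h := Real.sqrt_le_sqrt hx16
        rwa [show (16:ℝ)/(1-c)^2 = (4/(1-c))^2 by rw [div_pow]; norm_num, Real.sqrt_sq (by positivity)] at h
      have h4 : 4 ≤ Real.sqrt ((n : ℝ) * Real.log 2) * (1 - c) := (div_le_iff₀ h1c).mp hs
      have h5 := mul_le_mul_of_nonneg_right h4 (Real.sqrt_nonneg ((n : ℝ) * Real.log 2))
      nlinarith [h5, Real.sq_sqrt hx.le]
    nlinarith [key]
  · intro a ha b hb d hd hab hbd habd
    have h := hXfree (Finset.mem_coe.2 ha) (Finset.mem_coe.2 hb)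
      (Finset.mem_coe.2 hd) (show a + d = b + b by omega)
    omega
end

section
/- Let k ≥ 3 and n ≥ 3, and let E be a k-ary relation on ℝ. Fix an integer T ≥ 2 and a strictly increasing sequence a₁ < ⋯ < a_N of natural numbers, and suppose the sequence (a₁,…,a_N) contains no E-indiscernible subsequence of length n. Then the increasing enumeration (b₁ < b₂ < ⋯ < b_{2^N}) of B_T contains no E↑-indiscernible subsequence of length 2n + k − 4. -/
/-- The element of `B_T` with digit function `β`: the sum `Σ_i β(i)·T^(a i)`. -/
def digitSum {N : ℕ} (T : ℕ) (a : Fin N → ℕ) (β : Fin N → Bool) : ℕ :=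
  ∑ i, if β i then T ^ a i else 0

/-- `δ(b,c) = a_{Δ(b,c)}` where `Δ(b,c)` is the largest index at which the digit functions
`β`, `γ` of `b`, `c` differ (as `a` is strictly monotone, this equals the sup of `a` over all
differing indices). -/
def deltaVal {N : ℕ} (a : Fin N → ℕ) (β γ : Fin N → Bool) : ℕ :=
  (Finset.univ.filter fun i => β i ≠ γ i).sup a

/-- The `(k+1)`-ary step-up relation `E↑` of a `k`-ary relation `E` on ℝ (here `k = k₀ + 3`),
defined on increasing tuples from `B_T` via the top differing digits `δᵢ = δ(cᵢ₊₁, cᵢ)`,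
and false on all other tuples. -/
def StepUp {k N : ℕ} (E : (Fin (k + 3) → ℝ) → Prop) (T : ℕ) (a : Fin N → ℕ)
    (c : Fin (k + 4) → ℕ) : Prop :=
  StrictMono c ∧ ∃ β : Fin (k + 4) → Fin N → Bool,
    (∀ i, c i = digitSum T a (β i)) ∧
    (let d : Fin (k + 3) → ℝ := fun i => (deltaVal a (β i.castSucc) (β i.succ) : ℝ)
     (E d ∧ StrictMono d) ∨
     (E (fun i => d (Fin.rev i)) ∧ StrictAnti d) ∨
     (d 0 < d 1 ∧ d 2 < d 1))

open Finset
open scoped symmDiff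

section Colex

variable {α : Type*} [LinearOrder α] [OrderBot α] {s t u : Finset α}

lemma sup_symmDiff_mem_sdiff_of_toColex_lt (h : toColex s < toColex t) :
    (s ∆ t).sup id ∈ t \ s := by
  obtain ⟨hne, hmem⟩ := Colex.toColex_lt_toColex_iff_max'_mem.1 h
  have hsup : (s ∆ t).sup id = (s ∆ t).max' (symmDiff_nonempty.2 hne) := by
    rw [max'_eq_sup', sup'_eq_sup]
  rw [hsup, mem_sdiff]
  exact ⟨hmem, fun hs => (mem_symmDiff.1 (max'_mem _ _)).elim (fun h => h.2 hmem) (fun h => h.2 hs)⟩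

lemma sup_symmDiff_ne_of_toColex_lt (hst : toColex s < toColex t) (htu : toColex t < toColex u) :
    (s ∆ t).sup id ≠ (t ∆ u).sup id := fun h =>
  (mem_sdiff.1 (sup_symmDiff_mem_sdiff_of_toColex_lt htu)).2
    (h ▸ (mem_sdiff.1 (sup_symmDiff_mem_sdiff_of_toColex_lt hst)).1)

lemma sup_symmDiff_eq_max_of_toColex_lt (hst : toColex s < toColex t)
    (htu : toColex t < toColex u) :
    (s ∆ u).sup id = max ((s ∆ t).sup id) ((t ∆ u).sup id) := by
  set i := (s ∆ t).sup id
  set j := (t ∆ u).sup id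
  obtain ⟨hit, his⟩ := mem_sdiff.1 (sup_symmDiff_mem_sdiff_of_toColex_lt hst)
  obtain ⟨hju, hjt⟩ := mem_sdiff.1 (sup_symmDiff_mem_sdiff_of_toColex_lt htu)
  have hmem : max i j ∈ s ∆ u := by
    rcases lt_or_gt_of_ne (sup_symmDiff_ne_of_toColex_lt hst htu) with hij | hji
    · have hjs : j ∉ s := fun hjs =>
        hij.not_ge (le_sup (f := id) (mem_symmDiff.2 (Or.inl ⟨hjs, hjt⟩)))
      rw [max_eq_right hij.le]
      exact mem_symmDiff.2 (Or.inr ⟨hju, hjs⟩)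
    · have hiu : i ∈ u := by_contra fun hiu =>
        hji.not_ge (le_sup (f := id) (mem_symmDiff.2 (Or.inl ⟨hit, hiu⟩)))
      rw [max_eq_left hji.le]
      exact mem_symmDiff.2 (Or.inr ⟨hiu, his⟩)
  refine le_antisymm (Finset.sup_le fun x hx => ?_) (le_sup (f := id) hmem)
  rcases mem_union.1 (symmDiff_triangle s t u hx) with hx | hx
  · exact le_max_of_le_left (le_sup (f := id) hx)
  · exact le_max_of_le_right (le_sup (f := id) hx)

end Colex

section Digits

variable {N T : ℕ} {a : Fin N → ℕ} {β γ ρ : Fin N → Bool}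

def digitSet (a : Fin N → ℕ) (β : Fin N → Bool) : Finset ℕ :=
  (univ.filter fun i => β i = true).image a

lemma digitSum_eq_sum_digitSet (ha : Function.Injective a) :
    digitSum T a β = ∑ k ∈ digitSet a β, T ^ k := by
  rw [digitSet, sum_image ha.injOn, sum_filter, digitSum]

lemma deltaVal_eq_sup_symmDiff (ha : Function.Injective a) :
    deltaVal a β γ = (digitSet a β ∆ digitSet a γ).sup id := by
  rw [digitSet, digitSet, ← image_symmDiff _ _ ha, sup_image, deltaVal]
  congr 1
  ext i
  simp only [mem_filter, mem_univ, true_and, mem_symmDiff]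
  cases β i <;> cases γ i <;> simp

lemma digitSet_injective (ha : Function.Injective a) : Function.Injective (digitSet a) := by
  have hmem : ∀ β i, a i ∈ digitSet a β ↔ β i = true := by simp [digitSet, ha.eq_iff]
  intro β γ h
  funext i
  exact Bool.eq_iff_iff.2 ((hmem β i).symm.trans (h ▸ hmem γ i))

lemma digitSum_injective (hT : 2 ≤ T) (ha : Function.Injective a) :
    Function.Injective (digitSum T a) := fun β γ h =>
  digitSet_injective ha (geomSum_injective hT (by simpa [digitSum_eq_sum_digitSet ha] using h))

lemma digitSum_lt_digitSum_iff (hT : 2 ≤ T) (ha : Function.Injective a) :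
    digitSum T a β < digitSum T a γ ↔ toColex (digitSet a β) < toColex (digitSet a γ) := by
  rw [digitSum_eq_sum_digitSet ha, digitSum_eq_sum_digitSet ha,
    geomSum_lt_geomSum_iff_toColex_lt_toColex hT]

lemma deltaVal_ne_of_digitSum_lt (hT : 2 ≤ T) (ha : Function.Injective a)
    (h₁ : digitSum T a β < digitSum T a γ) (h₂ : digitSum T a γ < digitSum T a ρ) :
    deltaVal a β γ ≠ deltaVal a γ ρ := by
  rw [deltaVal_eq_sup_symmDiff ha, deltaVal_eq_sup_symmDiff ha]
  exact sup_symmDiff_ne_of_toColex_lt ((digitSum_lt_digitSum_iff hT ha).1 h₁)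
    ((digitSum_lt_digitSum_iff hT ha).1 h₂)

lemma deltaVal_eq_max_of_digitSum_lt (hT : 2 ≤ T) (ha : Function.Injective a)
    (h₁ : digitSum T a β < digitSum T a γ) (h₂ : digitSum T a γ < digitSum T a ρ) :
    deltaVal a β ρ = max (deltaVal a β γ) (deltaVal a γ ρ) := by
  simp only [deltaVal_eq_sup_symmDiff ha]
  exact sup_symmDiff_eq_max_of_toColex_lt ((digitSum_lt_digitSum_iff hT ha).1 h₁)
    ((digitSum_lt_digitSum_iff hT ha).1 h₂)

lemma deltaVal_mem_range (h : β ≠ γ) : deltaVal a β γ ∈ Set.range a := by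
  obtain ⟨i, hi⟩ := Function.ne_iff.1 h
  obtain ⟨j, -, hj⟩ :=
    exists_mem_eq_sup (univ.filter fun i => β i ≠ γ i) ⟨i, mem_filter.2 ⟨mem_univ i, hi⟩⟩ a
  exact ⟨j, hj.symm⟩

end Digits

section Runs

variable {α : Type*} [LinearOrder α] {g : ℕ → α} {r : ℕ}

lemma exists_strictMonoOn_or_strictAntiOn_of_no_valley (hr : 0 < r)
    (hne : ∀ i, i + 1 < 2 * r → g i ≠ g (i + 1))
    (hvalley : ∀ i, i + 2 < 2 * r → g (i + 1) < g i → g (i + 2) < g (i + 1)) :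
    ∃ s, s + r < 2 * r ∧
      (StrictMonoOn g (Set.Icc s (s + r)) ∨ StrictAntiOn g (Set.Icc s (s + r))) := by
  have persist : ∀ i, g (i + 1) < g i → ∀ j, i ≤ j → j + 1 < 2 * r → g (j + 1) < g j := by
    intro i hi j hij
    induction j, hij using Nat.le_induction with
    | base => exact fun _ => hi
    | succ j hij ih => exact fun hj => hvalley j (by omega) (ih (by omega))
  -- The middle step decides: a descent there lasts to the end, an ascent forces ascents before it.
  by_cases hmid : g (r - 1 + 1) < g (r - 1)
  · refine ⟨r - 1, by omega, Or.inr (strictAntiOn_of_succ_lt Set.ordConnected_Icc ?_)⟩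
    intro i _ hi hsucc
    have hi' : i + 1 ≤ r - 1 + r := by simpa using hsucc.2
    exact persist _ hmid i hi.1 (by omega)
  · refine ⟨0, by omega, Or.inl (strictMonoOn_of_lt_succ Set.ordConnected_Icc ?_)⟩
    intro i _ _ hsucc
    have hi : i + 1 ≤ r := by simpa using hsucc
    exact lt_of_le_of_ne (not_lt.1 fun h => hmid (persist i h _ (by omega) (by omega)))
      (hne i (by omega))

lemma exists_strictMonoOn_or_strictAntiOn_of_no_peak (hr : 0 < r)
    (hne : ∀ i, i + 1 < 2 * r → g i ≠ g (i + 1))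
    (hpeak : ∀ i, i + 2 < 2 * r → g i < g (i + 1) → g (i + 1) < g (i + 2)) :
    ∃ s, s + r < 2 * r ∧
      (StrictMonoOn g (Set.Icc s (s + r)) ∨ StrictAntiOn g (Set.Icc s (s + r))) := by
  obtain ⟨s, hs, hrun⟩ :=
    exists_strictMonoOn_or_strictAntiOn_of_no_valley (g := OrderDual.toDual ∘ g) hr
      (fun i hi => by simpa using hne i hi) hpeak
  exact ⟨s, hs, hrun.symm⟩

end Runs

lemma Fin.strictMono_snoc {α : Type*} [Preorder α] {n : ℕ} {f : Fin n → α} {x : α} :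
    StrictMono (Fin.snoc f x : Fin (n + 1) → α) ↔ (∀ j, f j < x) ∧ StrictMono f := by
  refine ⟨fun h => ⟨fun j => by simpa using h (Fin.castSucc_lt_last j),
    fun i j hij => by simpa using h (Fin.castSucc_lt_castSucc_iff.2 hij)⟩, ?_⟩
  rintro ⟨hx, hf⟩ i j hij
  induction j using Fin.lastCases with
  | last =>
    induction i using Fin.lastCases with
    | last => exact absurd hij (lt_irrefl _)
    | cast i => simpa using hx i
  | cast j =>
    induction i using Fin.lastCases with
    | last => exact absurd hij (not_lt.2 (Fin.le_last _))
    | cast i => simpa using hf (Fin.castSucc_lt_castSucc_iff.1 hij)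

lemma StrictMono.exists_comp_eq_of_forall_mem_range {ι κ β : Type*} [LinearOrder ι] [Preorder κ]
    [Preorder β] {f : ι → β} {u : κ → β} (hf : StrictMono f) (hu : StrictMono u)
    (h : ∀ j, u j ∈ Set.range f) : ∃ t : κ → ι, StrictMono t ∧ f ∘ t = u := by
  choose t ht using h
  exact ⟨t, fun i j hij => hf.lt_iff_lt.1 (by rw [ht, ht]; exact hu hij), funext ht⟩

section Ultrametric

variable {α : Type*} [LinearOrder α] {D : ℕ → ℕ → α} {m s r K : ℕ}

def UltrametricBelow (D : ℕ → ℕ → α) (m : ℕ) : Prop :=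
  ∀ x y z, x < y → y < z → z < m → D x z = max (D x y) (D y z)

lemma ultrametric_eq_last_of_strictMonoOn
    (hD : UltrametricBelow D m)
    (hrun : StrictMonoOn (fun i => D i (i + 1)) (Set.Icc s r)) (hr : r + 1 < m)
    {x y : ℕ} (hsx : s ≤ x) (hxy : x < y) (hy : y ≤ r + 1) : D x y = D (y - 1) y := by
  induction y, hxy using Nat.le_induction with
  | base => rfl
  | succ y hxy ih =>
    have hlt : D (y - 1) y < D y (y + 1) := by
      have := hrun (a := y - 1) ⟨by omega, by omega⟩ ⟨by omega, by omega⟩ (by omega : y - 1 < y)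
      simpa only [Nat.sub_add_cancel (by omega : 1 ≤ y)] using this
    rw [hD x y (y + 1) hxy (by omega) (by omega), ih (by omega), Nat.add_sub_cancel,
      max_eq_right hlt.le]

lemma ultrametric_eq_first_of_strictAntiOn
    (hD : UltrametricBelow D m)
    (hrun : StrictAntiOn (fun i => D i (i + 1)) (Set.Icc s r)) (hr : r + 1 < m)
    {x y : ℕ} (hsx : s ≤ x) (hxy : x < y) (hy : y ≤ r + 1) : D x y = D x (x + 1) := by
  induction y, hxy using Nat.le_induction with
  | base => rfl
  | succ y hxy ih =>
    rw [hD x y (y + 1) hxy (by omega) (by omega), ih (by omega),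
      max_eq_left (hrun ⟨hsx, by omega⟩ ⟨by omega, by omega⟩ hxy).le]

lemma exists_subtuple_of_strictMonoOn
    (hD : UltrametricBelow D m)
    (hrun : StrictMonoOn (fun i => D i (i + 1)) (Set.Icc s (s + r))) (hm : s + r + 1 < m)
    {σ : Fin K → Fin (r + 1)} (hσ : StrictMono σ) :
    ∃ q : Fin (K + 1) → ℕ, StrictMono q ∧ q (Fin.last K) < m ∧
      ∀ l : Fin K, D (q l.castSucc) (q l.succ) = D (s + σ l) (s + σ l + 1) := by
  set q : Fin (K + 1) → ℕ := Fin.cons s fun l => s + σ l + 1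
  have hq : ∀ l, s ≤ q l ∧ q l ≤ s + r + 1 := by
    intro l
    induction l using Fin.cases with
    | zero => simp only [q, Fin.cons_zero]; omega
    | succ l => simp only [q, Fin.cons_succ]; have := (σ l).isLt; omega
  have hqmono : StrictMono q :=
    Fin.strictMono_cons.2 ⟨fun _ => by omega, fun i j hij => by simpa using hσ hij⟩
  refine ⟨q, hqmono, by have := hq (Fin.last K); omega, fun l => ?_⟩
  rw [ultrametric_eq_last_of_strictMonoOn hD hrun hm (hq _).1 (hqmono Fin.castSucc_lt_succ)
    (hq _).2]
  simp [q]

lemma exists_subtuple_of_strictAntiOn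
    (hD : UltrametricBelow D m)
    (hrun : StrictAntiOn (fun i => D i (i + 1)) (Set.Icc s (s + r))) (hm : s + r + 1 < m)
    {σ : Fin K → Fin (r + 1)} (hσ : StrictMono σ) :
    ∃ q : Fin (K + 1) → ℕ, StrictMono q ∧ q (Fin.last K) < m ∧
      ∀ l : Fin K, D (q l.castSucc) (q l.succ) = D (s + r - σ l.rev) (s + r - σ l.rev + 1) := by
  set q : Fin (K + 1) → ℕ := Fin.snoc (fun l => s + r - σ l.rev) (s + r + 1)
  have hq : ∀ l, s ≤ q l ∧ q l ≤ s + r + 1 := by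
    intro l
    induction l using Fin.lastCases with
    | last => simp only [q, Fin.snoc_last]; omega
    | cast l => simp only [q, Fin.snoc_castSucc]; have := (σ l.rev).isLt; omega
  have hqmono : StrictMono q := by
    refine Fin.strictMono_snoc.2 ⟨fun _ => by omega, fun i j hij => ?_⟩
    have := Fin.lt_def.1 (hσ (Fin.rev_lt_rev.2 hij))
    have := (σ i.rev).isLt
    show s + r - (σ i.rev : ℕ) < s + r - σ j.rev
    omega
  refine ⟨q, hqmono, by have := hq (Fin.last K); omega, fun l => ?_⟩
  rw [ultrametric_eq_first_of_strictAntiOn hD hrun hm (hq _).1 (hqmono Fin.castSucc_lt_succ)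
    (hq _).2]
  simp [q]

end Ultrametric

lemma Fin.one_lt_two {n : ℕ} : (1 : Fin (n + 3)) < 2 := by
  rw [Fin.lt_def]
  simp [Nat.mod_eq_of_lt (show 2 < n + 3 by omega)]

section StepUpPattern

variable {k : ℕ} {E : (Fin (k + 3) → ℝ) → Prop} {d : Fin (k + 3) → ℝ}

def stepUpPattern (E : (Fin (k + 3) → ℝ) → Prop) (d : Fin (k + 3) → ℝ) : Prop :=
  (E d ∧ StrictMono d) ∨ (E (fun i => d (Fin.rev i)) ∧ StrictAnti d) ∨ (d 0 < d 1 ∧ d 2 < d 1)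

lemma stepUpPattern_iff_of_strictMono (hd : StrictMono d) : stepUpPattern E d ↔ E d := by
  refine ⟨fun h => ?_, fun h => Or.inl ⟨h, hd⟩⟩
  rcases h with ⟨h, -⟩ | ⟨-, had⟩ | ⟨-, h21⟩
  · exact h
  · exact absurd (hd Fin.zero_lt_one) (had Fin.zero_lt_one).asymm
  · exact absurd (hd Fin.one_lt_two) h21.asymm

lemma stepUpPattern_iff_of_strictAnti (hd : StrictAnti d) :
    stepUpPattern E d ↔ E fun i => d (Fin.rev i) := by
  refine ⟨fun h => ?_, fun h => Or.inr (Or.inl ⟨h, hd⟩)⟩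
  rcases h with ⟨-, hmd⟩ | ⟨h, -⟩ | ⟨h01, -⟩
  · exact absurd (hd Fin.zero_lt_one) (hmd Fin.zero_lt_one).asymm
  · exact h
  · exact absurd (hd Fin.zero_lt_one) h01.asymm

lemma not_stepUpPattern_of_lt_of_lt (h10 : d 1 < d 0) (h12 : d 1 < d 2) : ¬ stepUpPattern E d := by
  rintro (⟨-, hmd⟩ | ⟨-, had⟩ | ⟨h01, -⟩)
  · exact (hmd Fin.zero_lt_one).asymm h10
  · exact (had Fin.one_lt_two).asymm h12
  · exact h01.asymm h10

end StepUpPattern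

lemma stepUp_iff {k N T : ℕ} {E : (Fin (k + 3) → ℝ) → Prop} {a : Fin N → ℕ} (hT : 2 ≤ T)
    (ha : Function.Injective a) {c : Fin (k + 4) → ℕ} {β : Fin (k + 4) → Fin N → Bool}
    (hβ : ∀ i, c i = digitSum T a (β i)) :
    StepUp E T a c ↔
      StrictMono c ∧ stepUpPattern E fun i => (deltaVal a (β i.castSucc) (β i.succ) : ℝ) := by
  refine ⟨fun ⟨hc, β', hβ', h⟩ => ⟨hc, ?_⟩, fun ⟨hc, h⟩ => ⟨hc, β, hβ, h⟩⟩
  obtain rfl : β' = β := funext fun i => digitSum_injective hT ha ((hβ' i).symm.trans (hβ i))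
  exact h

section Transfer

variable {k N m s r : ℕ} {E : (Fin (k + 3) → ℝ) → Prop} {a : Fin N → ℕ} {D : ℕ → ℕ → ℕ}

-- The tuple `(δ₁, …, δ_K)` of the step-up relation for the subtuple at positions `q`, with
-- `D x y` standing for `δ(c_x, c_y)`.
def gaps {K : ℕ} (D : ℕ → ℕ → ℕ) (q : Fin (K + 1) → ℕ) : Fin K → ℝ :=
  fun l => (D (q l.castSucc) (q l.succ) : ℝ)

lemma exists_strictMono_stepUpPattern_iff_of_strictMonoOn (ha : StrictMono a)
    (hD : UltrametricBelow D m)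
    (hrange : ∀ i, i + 1 < m → D i (i + 1) ∈ Set.range a)
    (hrun : StrictMonoOn (fun i => D i (i + 1)) (Set.Icc s (s + r))) (hm : s + r + 1 < m) :
    ∃ t : Fin (r + 1) → Fin N, StrictMono t ∧ ∀ σ : Fin (k + 3) → Fin (r + 1), StrictMono σ →
      ∃ q : Fin (k + 4) → ℕ, StrictMono q ∧ q (Fin.last _) < m ∧
        (stepUpPattern E (gaps D q) ↔ E fun j => (a (t (σ j)) : ℝ)) := by
  have hu : StrictMono fun j : Fin (r + 1) => D (s + j) (s + j + 1) := fun i j hij =>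
    hrun ⟨by omega, by omega⟩ ⟨by omega, by omega⟩ (by simpa using hij)
  obtain ⟨t, ht, hat⟩ := ha.exists_comp_eq_of_forall_mem_range hu fun j => hrange _ (by omega)
  refine ⟨t, ht, fun σ hσ => ?_⟩
  obtain ⟨q, hq, hlast, hgap⟩ := exists_subtuple_of_strictMonoOn hD hrun hm hσ
  have hgaps : gaps D q = fun j => (a (t (σ j)) : ℝ) :=
    funext fun l => by simp [gaps, hgap, ← congrFun hat (σ l)]
  refine ⟨q, hq, hlast, ?_⟩
  rw [hgaps, stepUpPattern_iff_of_strictMono]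
  exact fun i j hij => by simpa using ha (ht (hσ hij))

lemma exists_strictMono_stepUpPattern_iff_of_strictAntiOn (ha : StrictMono a)
    (hD : UltrametricBelow D m)
    (hrange : ∀ i, i + 1 < m → D i (i + 1) ∈ Set.range a)
    (hrun : StrictAntiOn (fun i => D i (i + 1)) (Set.Icc s (s + r))) (hm : s + r + 1 < m) :
    ∃ t : Fin (r + 1) → Fin N, StrictMono t ∧ ∀ σ : Fin (k + 3) → Fin (r + 1), StrictMono σ →
      ∃ q : Fin (k + 4) → ℕ, StrictMono q ∧ q (Fin.last _) < m ∧
        (stepUpPattern E (gaps D q) ↔ E fun j => (a (t (σ j)) : ℝ)) := by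
  have hu : StrictMono fun j : Fin (r + 1) => D (s + r - j) (s + r - j + 1) := fun i j hij => by
    have := Fin.lt_def.1 hij
    have := j.isLt
    exact hrun ⟨by omega, by omega⟩ ⟨by omega, by omega⟩ (by omega)
  obtain ⟨t, ht, hat⟩ := ha.exists_comp_eq_of_forall_mem_range hu fun j => hrange _ (by omega)
  refine ⟨t, ht, fun σ hσ => ?_⟩
  obtain ⟨q, hq, hlast, hgap⟩ := exists_subtuple_of_strictAntiOn hD hrun hm hσ
  have hgaps : gaps D q = fun j => (a (t (σ j.rev)) : ℝ) :=
    funext fun l => by simp [gaps, hgap, ← congrFun hat (σ l.rev)]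
  refine ⟨q, hq, hlast, ?_⟩
  rw [stepUpPattern_iff_of_strictAnti, hgaps]
  · simp only [Fin.rev_rev]
  · rw [hgaps]
    exact fun i j hij => by simpa using ha (ht (hσ (Fin.rev_lt_rev.2 hij)))

end Transfer

section Windows

variable {k m : ℕ} {E : (Fin (k + 3) → ℝ) → Prop} {D : ℕ → ℕ → ℕ}

lemma gaps_add_window (i : ℕ) :
    gaps D (fun j : Fin (k + 4) => i + j) 0 = D i (i + 1) ∧
    gaps D (fun j : Fin (k + 4) => i + j) 1 = D (i + 1) (i + 2) ∧
    gaps D (fun j : Fin (k + 4) => i + j) 2 = D (i + 2) (i + 3) := by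
  simp [gaps, Nat.mod_eq_of_lt (show 2 < k + 3 by omega),
    Nat.mod_eq_of_lt (show 2 < k + 4 by omega)]

lemma no_valley_of_forall_stepUpPattern
    (hall : ∀ q : Fin (k + 4) → ℕ, StrictMono q → q (Fin.last _) < m → stepUpPattern E (gaps D q))
    {i : ℕ} (hi : i + (k + 3) < m) (hne : D (i + 1) (i + 2) ≠ D (i + 2) (i + 3))
    (h10 : D (i + 1) (i + 2) < D i (i + 1)) : D (i + 2) (i + 3) < D (i + 1) (i + 2) := by
  obtain ⟨h0, h1, h2⟩ := gaps_add_window (k := k) (D := D) i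
  refine lt_of_le_of_ne (not_lt.1 fun h12 => ?_) hne.symm
  refine not_stepUpPattern_of_lt_of_lt ?_ ?_
    (hall (fun j => i + j) (fun _ _ h => by simpa using h) (by simpa using hi))
  · rw [h0, h1]; exact_mod_cast h10
  · rw [h1, h2]; exact_mod_cast h12

lemma no_peak_of_forall_not_stepUpPattern
    (hnone : ∀ q : Fin (k + 4) → ℕ, StrictMono q → q (Fin.last _) < m →
      ¬ stepUpPattern E (gaps D q))
    {i : ℕ} (hi : i + (k + 3) < m) (hne : D (i + 1) (i + 2) ≠ D (i + 2) (i + 3))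
    (h01 : D i (i + 1) < D (i + 1) (i + 2)) : D (i + 1) (i + 2) < D (i + 2) (i + 3) := by
  obtain ⟨h0, h1, h2⟩ := gaps_add_window (k := k) (D := D) i
  refine lt_of_le_of_ne (not_lt.1 fun h21 => ?_) hne
  refine hnone (fun j => i + j) (fun _ _ h => by simpa using h) (by simpa using hi)
    (Or.inr (Or.inr ⟨?_, ?_⟩))
  · rw [h0, h1]; exact_mod_cast h01
  · rw [h1, h2]; exact_mod_cast h21

lemma exists_strictMonoOn_or_strictAntiOn_gaps {r : ℕ} (hr : 0 < r) (hm : 2 * r + k + 1 ≤ m)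
    (hne : ∀ i, i + 2 < m → D i (i + 1) ≠ D (i + 1) (i + 2))
    (hdich : (∀ q : Fin (k + 4) → ℕ, StrictMono q → q (Fin.last _) < m →
        stepUpPattern E (gaps D q)) ∨
      (∀ q : Fin (k + 4) → ℕ, StrictMono q → q (Fin.last _) < m →
        ¬ stepUpPattern E (gaps D q))) :
    ∃ s, s + r < 2 * r ∧ (StrictMonoOn (fun i => D i (i + 1)) (Set.Icc s (s + r)) ∨
      StrictAntiOn (fun i => D i (i + 1)) (Set.Icc s (s + r))) := by
  rcases hdich with hall | hnone
  · exact exists_strictMonoOn_or_strictAntiOn_of_no_valley hr (fun i _ => hne i (by omega))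
      fun i _ => no_valley_of_forall_stepUpPattern hall (by omega) (hne _ (by omega))
  · exact exists_strictMonoOn_or_strictAntiOn_of_no_peak hr (fun i _ => hne i (by omega))
      fun i _ => no_peak_of_forall_not_stepUpPattern hnone (by omega) (hne _ (by omega))

end Windows

section Core

variable {k N T : ℕ} {E : (Fin (k + 3) → ℝ) → Prop} {a : Fin N → ℕ}

lemma forall_stepUpPattern_or_forall_not (hT : 2 ≤ T) (ha : Function.Injective a) {m : ℕ}
    {c : Fin m → ℕ} (hc : StrictMono c) {β : ℕ → Fin N → Bool}
    (hβ : ∀ x (hx : x < m), c ⟨x, hx⟩ = digitSum T a (β x))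
    (hind : IsIndiscernible (StepUp E T a) c) :
    (∀ q : Fin (k + 4) → ℕ, StrictMono q → q (Fin.last _) < m →
      stepUpPattern E (gaps (fun x y => deltaVal a (β x) (β y)) q)) ∨
    (∀ q : Fin (k + 4) → ℕ, StrictMono q → q (Fin.last _) < m →
      ¬ stepUpPattern E (gaps (fun x y => deltaVal a (β x) (β y)) q)) := by
  have key : ∀ q : Fin (k + 4) → ℕ, StrictMono q → ∀ hq : q (Fin.last _) < m,
      ∃ q' : Fin (k + 4) → Fin m, StrictMono q' ∧
        (StepUp E T a (c ∘ q') ↔ stepUpPattern E (gaps (fun x y => deltaVal a (β x) (β y)) q)) := by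
    intro q hq hlast
    have hq' : StrictMono fun l => (⟨q l, (hq.monotone (Fin.le_last l)).trans_lt hlast⟩ : Fin m) :=
      fun i j hij => hq hij
    exact ⟨_, hq', (stepUp_iff hT ha fun l => hβ _ _).trans (and_iff_right (hc.comp hq'))⟩
  refine hind.imp (fun hall q hq hlast => ?_) (fun hnone q hq hlast hpat => ?_)
  · obtain ⟨q', hq', hiff⟩ := key q hq hlast
    exact hiff.1 (hall q' hq')
  · obtain ⟨q', hq', hiff⟩ := key q hq hlast
    exact hnone q' hq' (hiff.2 hpat)

theorem exists_isIndiscernible_of_isIndiscernible_stepUp {n m : ℕ} (hn : 2 ≤ n)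
    (hm : 2 * n + (k + 3) - 4 ≤ m) (hT : 2 ≤ T) (ha : StrictMono a) {c : Fin m → ℕ}
    (hc : StrictMono c) (hmem : ∀ x, ∃ β, c x = digitSum T a β) (hind : IsIndiscernible (StepUp E T a) c) :
    ∃ t : Fin n → Fin N, StrictMono t ∧ IsIndiscernible E fun j => (a (t j) : ℝ) := by
  obtain ⟨r, rfl⟩ : ∃ r, n = r + 1 := ⟨n - 1, by omega⟩
  -- Digits of `c`, extended arbitrarily beyond `m` so that positions range over `ℕ`.
  have hdig : ∀ x : ℕ, ∃ β : Fin N → Bool, ∀ hx : x < m, c ⟨x, hx⟩ = digitSum T a β := fun x =>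
    if hx : x < m then (hmem ⟨x, hx⟩).imp fun _ h _ => h else ⟨fun _ => false, fun h => absurd h hx⟩
  choose β hβ using hdig
  set D : ℕ → ℕ → ℕ := fun x y => deltaVal a (β x) (β y)
  have hlt : ∀ x y, x < y → y < m → digitSum T a (β x) < digitSum T a (β y) := fun x y hxy hy => by
    rw [← hβ x (hxy.trans hy), ← hβ y hy]
    exact hc hxy
  have hD : UltrametricBelow D m :=
    fun x y z hxy hyz hz => deltaVal_eq_max_of_digitSum_lt hT ha.injective
      (hlt x y hxy (hyz.trans hz)) (hlt y z hyz hz)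
  have hne : ∀ i, i + 2 < m → D i (i + 1) ≠ D (i + 1) (i + 2) := fun i hi =>
    deltaVal_ne_of_digitSum_lt hT ha.injective (hlt _ _ (by omega) (by omega))
      (hlt _ _ (by omega) hi)
  have hrange : ∀ i, i + 1 < m → D i (i + 1) ∈ Set.range a := fun i hi =>
    deltaVal_mem_range fun h => (hlt i (i + 1) (by omega) hi).ne (congrArg _ h)
  have hdich := forall_stepUpPattern_or_forall_not (E := E) hT ha.injective hc hβ hind
  obtain ⟨s, hs, hrun⟩ := exists_strictMonoOn_or_strictAntiOn_gaps (r := r) (by omega) (by omega)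
    hne hdich
  obtain ⟨t, ht, htr⟩ := hrun.elim
    (exists_strictMono_stepUpPattern_iff_of_strictMonoOn (E := E) ha hD hrange · (by omega))
    (exists_strictMono_stepUpPattern_iff_of_strictAntiOn ha hD hrange · (by omega))
  refine ⟨t, ht, hdich.imp (fun hall σ hσ => ?_) (fun hnone σ hσ hE => ?_)⟩
  · obtain ⟨q, hq, hlast, hiff⟩ := htr σ hσ
    exact hiff.1 (hall q hq hlast)
  · obtain ⟨q, hq, hlast, hiff⟩ := htr σ hσ
    exact hnone q hq hlast (hiff.2 hE)

end Core

theorem stepUp_no_indiscernible_general (k n : ℕ) (hn : 3 ≤ n) (E : (Fin (k + 3) → ℝ) → Prop)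
    (T : ℕ) (hT : 2 ≤ T) (N : ℕ) (a : Fin N → ℕ) (ha : StrictMono a)
    (hno : ¬ ∃ t : Fin n → Fin N, StrictMono t ∧
        IsIndiscernible E fun j => (a (t j) : ℝ))
    (b : Fin (2 ^ N) → ℕ) (hb : StrictMono b)
    (hmem : ∀ x : Fin (2 ^ N), ∃ β : Fin N → Bool, b x = digitSum T a β) :
    ¬ ∃ t : Fin (2 * n + (k + 3) - 4) → Fin (2 ^ N), StrictMono t ∧
        IsIndiscernible (StepUp E T a) (b ∘ t) := by
  rintro ⟨t, ht, hind⟩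
  exact hno (exists_isIndiscernible_of_isIndiscernible_stepUp (by omega) le_rfl hT ha (hb.comp ht)
    (fun x => hmem (t x)) hind)

/-- The Erdős–Hajnal step-up: if `(a₁,…,a_N)` has no `E`-indiscernible subsequence of length
`n`, then the increasing enumeration of `B_T` has no `E↑`-indiscernible subsequence of length
`2n + k − 4` (here the arity is `k = k₀ + 3`, so the length is `2n + k₀ − 1`). -/
theorem stepUp_no_indiscernible (k n : ℕ) (hn : 3 ≤ n) (E : (Fin (k + 3) → ℝ) → Prop)
    (T : ℕ) (hT : 2 ≤ T) (N : ℕ) (a : Fin N → ℕ) (ha : StrictMono a)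
    (hno : ¬ ∃ t : Fin n → Fin N, StrictMono t ∧
        IsIndiscernible E fun j => (a (t j) : ℝ))
    (b : Fin (2 ^ N) → ℕ) (hb : StrictMono b)
    (hmem : ∀ x : Fin (2 ^ N), ∃ β : Fin N → Bool, b x = digitSum T a β)
    (honto : ∀ β : Fin N → Bool, ∃ x : Fin (2 ^ N), digitSum T a β = b x) :
    ¬ ∃ t : Fin (2 * n + (k + 3) - 4) → Fin (2 ^ N), StrictMono t ∧
        IsIndiscernible (StepUp E T a) (b ∘ t) :=
  stepUp_no_indiscernible_general k n hn E T hT N a ha hno b hb hmem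
end

section
/- For every ε > 0 there is an integer T₀ such that for every integer T ≥ T₀, every N ∈ ℕ, every strictly increasing sequence a₁ < ⋯ < a_N of natural numbers, and all b > c in B_T, we have |δ(b,c) − log_T(b − c)| < ε, where log_T denotes the base-T logarithm. -/
/-- For every `ε > 0` there is `T₀` such that for every `T ≥ T₀`, any strictly increasing
`a : Fin N → ℕ`, and any `b > c` in `B_T`, one has `|δ(b,c) − log_T (b − c)| < ε`. -/
theorem deltaVal_close_to_logT (ε : ℝ) (hε : 0 < ε) :
    ∃ T₀ : ℕ, ∀ T : ℕ, T₀ ≤ T → ∀ N : ℕ, ∀ a : Fin N → ℕ, StrictMono a →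
      ∀ β γ : Fin N → Bool, digitSum T a γ < digitSum T a β →
        |(deltaVal a β γ : ℝ) -
            Real.logb T ((digitSum T a β : ℝ) - (digitSum T a γ : ℝ))| < ε := by
  refine ⟨max 3 (⌈(2:ℝ)^((1:ℝ)/ε)⌉₊ + 1), ?_⟩
  intro T hT N a ha β γ hlt
  have hT3 : 3 ≤ T := le_trans (le_max_left _ _) hT
  have hT3R : (3:ℝ) ≤ (T:ℝ) := by exact_mod_cast hT3
  have hT1 : (1:ℝ) < (T:ℝ) := by linarith
  have hT0 : (0:ℝ) < (T:ℝ) := by linarith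
  -- logb T 2 < ε
  have hceil : (⌈(2:ℝ)^((1:ℝ)/ε)⌉₊ + 1 : ℕ) ≤ T := le_trans (le_max_right _ _) hT
  have h2T : (2:ℝ)^((1:ℝ)/ε) < (T:ℝ) := by
    calc (2:ℝ)^((1:ℝ)/ε) ≤ (⌈(2:ℝ)^((1:ℝ)/ε)⌉₊ : ℝ) := Nat.le_ceil _
    _ < ((⌈(2:ℝ)^((1:ℝ)/ε)⌉₊ + 1 : ℕ) : ℝ) := by push_cast; linarith
    _ ≤ (T:ℝ) := by exact_mod_cast hceil
  have hlog2 : (0:ℝ) < Real.log 2 := Real.log_pos (by norm_num)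
  have hlogT : Real.log 2 / ε < Real.log T := by
    have := Real.log_lt_log (Real.rpow_pos_of_pos two_pos _) h2T
    rwa [Real.log_rpow two_pos, one_div, inv_mul_eq_div] at this
  have hlogTpos : 0 < Real.log T := lt_trans (div_pos hlog2 hε) hlogT
  have hlb2 : Real.logb T 2 < ε := by
    rw [Real.logb, div_lt_iff₀ hlogTpos]
    calc Real.log 2 = ε * (Real.log 2 / ε) := by field_simp
    _ < ε * Real.log T := by exact mul_lt_mul_of_pos_left hlogT hε
  have hlb2pos : 0 ≤ Real.logb T 2 := Real.logb_nonneg hT1 (by norm_num)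
  -- set up differing set
  set S := Finset.univ.filter fun i => β i ≠ γ i with hS
  have hne : S.Nonempty := by
    rw [hS, Finset.filter_nonempty_iff]
    by_contra h
    push_neg at h
    have : β = γ := funext fun i => by simpa using h i (Finset.mem_univ i)
    rw [this] at hlt; exact lt_irrefl _ hlt
  set m := S.max' hne with hmdef
  have hm : m ∈ S := S.max'_mem hne
  have hdelta : deltaVal a β γ = a m := by
    refine le_antisymm (Finset.sup_le fun i hi => ha.monotone (S.le_max' i hi))
      (Finset.le_sup hm)
  -- the real difference as a sum over S
  set g : Fin N → ℝ := fun i =>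
    (if β i then (T:ℝ)^(a i) else 0) - (if γ i then (T:ℝ)^(a i) else 0) with hg
  have hcast : ∀ δ : Fin N → Bool,
      (digitSum T a δ : ℝ) = ∑ i, (if δ i then (T:ℝ)^(a i) else 0) := by
    intro δ
    rw [digitSum, Nat.cast_sum]
    refine Finset.sum_congr rfl fun i _ => ?_
    split <;> push_cast <;> ring
  set D : ℝ := (digitSum T a β : ℝ) - (digitSum T a γ : ℝ) with hDdef
  have hDsum : D = ∑ i ∈ S, g i := by
    rw [hDdef, hcast, hcast, ← Finset.sum_sub_distrib]
    refine (Finset.sum_subset (Finset.subset_univ S) fun i _ hiS => ?_).symm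
    have : β i = γ i := by
      by_contra hne'
      exact hiS (by simp [hS, hne'])
    simp [hg, this]
  have hDpos : 0 < D := by
    rw [hDdef, sub_pos]
    exact_mod_cast hlt
  -- bound the remainder
  set R : ℝ := ∑ i ∈ S.erase m, g i with hR
  have hDm : D = g m + R := by rw [hDsum, hR, Finset.add_sum_erase S g hm]
  have hgabs : ∀ i ∈ S, |g i| = (T:ℝ)^(a i) := by
    intro i hi
    have hne' : β i ≠ γ i := (Finset.mem_filter.mp hi).2
    have hTp : (0:ℝ) ≤ (T:ℝ)^(a i) := by positivity
    rcases Bool.eq_false_or_eq_true (β i) with hb | hb <;>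
      rcases Bool.eq_false_or_eq_true (γ i) with hc | hc
    · exact absurd (hb.trans hc.symm) hne'
    · have : g i = (T:ℝ)^(a i) := by simp [hg, hb, hc]
      rw [this, abs_of_nonneg hTp]
    · have : g i = -((T:ℝ)^(a i)) := by simp [hg, hb, hc]
      rw [this, abs_neg, abs_of_nonneg hTp]
    · exact absurd (hb.trans hc.symm) hne'
  have hgeo : ∑ j ∈ Finset.range (a m), (T:ℝ)^j ≤ (T:ℝ)^(a m) / 2 := by
    rw [geom_sum_eq (by linarith : (T:ℝ) ≠ 1)]
    have hTn : (1:ℝ) ≤ (T:ℝ)^(a m) := one_le_pow₀ (by linarith)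
    rw [div_le_div_iff₀ (by linarith) (by norm_num)]
    nlinarith [pow_pos hT0 (a m)]
  have hRbound : |R| ≤ (T:ℝ)^(a m) / 2 := by
    calc |R| ≤ ∑ i ∈ S.erase m, |g i| := Finset.abs_sum_le_sum_abs _ _
    _ = ∑ i ∈ S.erase m, (T:ℝ)^(a i) := by
        refine Finset.sum_congr rfl fun i hi => hgabs i (Finset.mem_of_mem_erase hi)
    _ = ∑ j ∈ (S.erase m).image a, (T:ℝ)^j := by
        rw [Finset.sum_image (fun x _ y _ h => ha.injective h)]
    _ ≤ ∑ j ∈ Finset.range (a m), (T:ℝ)^j := by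
        refine Finset.sum_le_sum_of_subset_of_nonneg ?_ (fun j _ _ => by positivity)
        intro j hj
        obtain ⟨i, hi, rfl⟩ := Finset.mem_image.mp hj
        have hilt : i < m := lt_of_le_of_ne (S.le_max' i (Finset.mem_of_mem_erase hi))
          (Finset.ne_of_mem_erase hi)
        exact Finset.mem_range.mpr (ha hilt)
    _ ≤ (T:ℝ)^(a m) / 2 := hgeo
  have hPpos : (0:ℝ) < (T:ℝ)^(a m) := by positivity
  have habsR : -((T:ℝ)^(a m) / 2) ≤ R ∧ R ≤ (T:ℝ)^(a m) / 2 := abs_le.mp hRbound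
  have hβm : β m = true := by
    by_contra hb
    have hb' : β m = false := Bool.eq_false_iff.mpr hb
    have hcm : γ m = true := by
      have hne' : β m ≠ γ m := (Finset.mem_filter.mp hm).2
      rcases Bool.eq_false_or_eq_true (γ m) with hc | hc
      · exact hc
      · exact absurd (hb'.trans hc.symm) hne'
    have : g m = -((T:ℝ)^(a m)) := by simp [hg, hb', hcm]
    rw [hDm, this] at hDpos
    linarith [habsR.2]
  have hγm : γ m = false := by
    have hne' : β m ≠ γ m := (Finset.mem_filter.mp hm).2
    rcases Bool.eq_false_or_eq_true (γ m) with hc | hc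
    · exact absurd (hβm.trans hc.symm) hne'
    · exact hc
  have hgm : g m = (T:ℝ)^(a m) := by simp [hg, hβm, hγm]
  have hlow : (T:ℝ)^(a m) / 2 ≤ D := by rw [hDm, hgm]; linarith [habsR.1]
  have hhigh : D ≤ 2 * (T:ℝ)^(a m) := by rw [hDm, hgm]; linarith [habsR.2]
  -- logarithm bounds
  have hlogP : Real.logb T ((T:ℝ)^(a m)) = (a m : ℝ) := by
    rw [Real.logb_pow, Real.logb_self_eq_one hT1, mul_one]
  have hub : Real.logb T D ≤ (a m : ℝ) + Real.logb T 2 := by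
    have := Real.logb_le_logb_of_le hT1 hDpos hhigh
    rwa [Real.logb_mul (by norm_num) (ne_of_gt hPpos), hlogP, add_comm] at this
  have hlb : (a m : ℝ) - Real.logb T 2 ≤ Real.logb T D := by
    have := Real.logb_le_logb_of_le hT1 (by linarith : (0:ℝ) < (T:ℝ)^(a m)/2) hlow
    rwa [Real.logb_div (ne_of_gt hPpos) (by norm_num), hlogP] at this
  rw [hdelta]
  have : |(a m : ℝ) - Real.logb T D| ≤ Real.logb T 2 :=
    abs_le.mpr ⟨by linarith, by linarith⟩
  exact lt_of_le_of_lt this hlb2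
end

section
/- Let p be a prime and k ≥ 1 an integer. For every finite set A ⊆ ℚ_p with |A| ≥ 2p^{k−1} there exist α ∈ ℚ_p and pairwise distinct elements a₁, …, a_k ∈ A such that α ≠ a_i for every i and the valuations v(α − a₁), …, v(α − a_k) are pairwise distinct, where v is the p-adic valuation. -/
/-!
Induct on `k`. Let `x, y ∈ A` realise the diameter `d = ‖x - y‖` of `A`. Scaling by `x - y` and
reducing modulo `p` splits `A` into `p` classes of diameter `< d`, so some class `B` has at least
`|A| / p` elements. Induction inside `B` gives `α ∈ B` and `a₁, …, a_k ∈ B` with distinct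
`‖α - aᵢ‖ < d`, and by the ultrametric inequality one of `x, y` lies at distance exactly `d`
from `α`; it is the new point `a₀`.
-/

open Finset Function

namespace IsUltrametricDist

theorem norm_sub_eq_or_norm_sub_eq {E : Type*} [SeminormedAddCommGroup E] [IsUltrametricDist E]
    {α x y : E} (hx : ‖α - x‖ ≤ ‖x - y‖) (hy : ‖α - y‖ ≤ ‖x - y‖) :
    ‖α - x‖ = ‖x - y‖ ∨ ‖α - y‖ = ‖x - y‖ := by
  by_contra! h
  have := dist_triangle_max x α y
  rw [dist_eq_norm, dist_eq_norm, dist_eq_norm, norm_sub_rev x α] at this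
  exact (this.trans_lt (max_lt (hx.lt_of_ne h.1) (hy.lt_of_ne h.2))).false

end IsUltrametricDist

theorem Finset.exists_ne_forall_norm_sub_le {E : Type*} [SeminormedAddGroup E] {A : Finset E}
    (hA : 1 < #A) : ∃ x ∈ A, ∃ y ∈ A, x ≠ y ∧ ∀ u ∈ A, ∀ w ∈ A, ‖u - w‖ ≤ ‖x - y‖ := by
  classical
  obtain ⟨x₀, hx₀, y₀, hy₀, hx₀y₀⟩ := one_lt_card.1 hA
  obtain ⟨⟨x, y⟩, hxy, hmax⟩ := A.offDiag.exists_max_image (fun q ↦ ‖q.1 - q.2‖)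
    ⟨(x₀, y₀), mem_offDiag.2 ⟨hx₀, hy₀, hx₀y₀⟩⟩
  simp only [mem_offDiag] at hxy hmax
  refine ⟨x, hxy.1, y, hxy.2.1, hxy.2.2, fun u hu w hw ↦ ?_⟩
  rcases eq_or_ne u w with rfl | huw
  · simp
  · exact hmax (u, w) ⟨hu, hw, huw⟩

variable {p : ℕ} [Fact p.Prime]

theorem PadicInt.norm_sub_lt_one_of_toZMod_eq {u w : ℤ_[p]} (h : toZMod u = toZMod w) :
    ‖u - w‖ < 1 := by
  rw [← mem_nonunits, ← IsLocalRing.mem_maximalIdeal, ← ker_toZMod, RingHom.mem_ker, map_sub, h,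
    sub_self]

namespace Padic

theorem exists_subset_norm_sub_lt_of_mul_le_card {z : ℚ_[p]} (hz : z ≠ 0) {A : Finset ℚ_[p]}
    (hA : ∀ x ∈ A, ∀ y ∈ A, ‖x - y‖ ≤ ‖z‖) {n : ℕ} (hn : p * n ≤ #A) :
    ∃ B ⊆ A, n ≤ #B ∧ ∀ x ∈ B, ∀ y ∈ B, ‖x - y‖ < ‖z‖ := by
  classical
  rcases A.eq_empty_or_nonempty with rfl | ⟨a₀, ha₀⟩
  · have : n = 0 := by simpa [(Fact.out : p.Prime).ne_zero] using hn
    exact ⟨∅, empty_subset _, by simp [this], by simp⟩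
  have hz' : 0 < ‖z‖ := norm_pos_iff.2 hz
  have hint : ∀ x ∈ A, ‖(x - a₀) / z‖ ≤ 1 := fun x hx ↦ by
    rw [norm_div, div_le_one hz']
    exact hA x hx a₀ ha₀
  let residue : ℚ_[p] → ZMod p := fun x ↦
    if h : ‖(x - a₀) / z‖ ≤ 1 then PadicInt.toZMod ⟨_, h⟩ else 0
  obtain ⟨r, -, hr⟩ := exists_le_card_fiber_of_mul_le_card_of_maps_to
    (fun x _ ↦ mem_univ (residue x)) univ_nonempty (by rwa [card_univ, ZMod.card])
  refine ⟨{x ∈ A | residue x = r}, filter_subset _ _, hr, fun x hx y hy ↦ ?_⟩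
  rw [mem_filter] at hx hy
  have hxy : ‖(x - a₀) / z - (y - a₀) / z‖ < 1 :=
    PadicInt.norm_sub_lt_one_of_toZMod_eq (u := ⟨_, hint x hx.1⟩) (w := ⟨_, hint y hy.1⟩)
      (by simp only [residue, dif_pos (hint x hx.1), dif_pos (hint y hy.1)] at hx hy
          rw [hx.2, hy.2])
  rwa [← sub_div, sub_sub_sub_cancel_right, norm_div, div_lt_one hz'] at hxy

theorem exists_injective_norm_sub_of_two_mul_pow_le_card (k : ℕ) {A : Finset ℚ_[p]}
    (hA : 2 * p ^ k ≤ #A) :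
    ∃ α ∈ A, ∃ a : Fin (k + 1) → ℚ_[p], (∀ i, a i ∈ A ∧ a i ≠ α) ∧ Injective fun i ↦ ‖α - a i‖ := by
  induction k generalizing A with
  | zero =>
    obtain ⟨x, hx, y, hy, hxy⟩ := one_lt_card.1 (by rwa [pow_zero, mul_one] at hA)
    exact ⟨x, hx, fun _ ↦ y, fun _ ↦ ⟨hy, hxy.symm⟩,
      injective_of_subsingleton (α := Fin 1) _⟩
  | succ k ih =>
    have hA₂ : 1 < #A := by
      have := pow_pos (Fact.out : p.Prime).pos (k + 1)
      omega
    obtain ⟨x, hx, y, hy, hxy, hdiam⟩ := exists_ne_forall_norm_sub_le hA₂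
    obtain ⟨B, hBA, hB, hBdiam⟩ := exists_subset_norm_sub_lt_of_mul_le_card
      (sub_ne_zero.2 hxy) hdiam (n := 2 * p ^ k) (by rw [pow_succ] at hA; linarith)
    obtain ⟨α, hαB, a, haB, ha⟩ := ih hB
    have hαA := hBA hαB
    obtain ⟨c, hcA, hc⟩ : ∃ c ∈ A, ‖α - c‖ = ‖x - y‖ :=
      (IsUltrametricDist.norm_sub_eq_or_norm_sub_eq (hdiam α hαA x hx)
        (hdiam α hαA y hy)).elim (⟨x, hx, ·⟩) (⟨y, hy, ·⟩)
    have hlt : ∀ i, ‖α - a i‖ < ‖α - c‖ := fun i ↦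
      hc ▸ hBdiam α hαB (a i) (haB i).1
    have hcα : c ≠ α := by
      rintro rfl
      simp [eq_comm, sub_eq_zero, hxy] at hc
    refine ⟨α, hαA, Fin.cons c a, Fin.cases ⟨hcA, hcα⟩ fun i ↦ ⟨hBA (haB i).1, (haB i).2⟩, ?_⟩
    change Injective ((fun b ↦ ‖α - b‖) ∘ Fin.cons c a)
    rw [Fin.comp_cons, Fin.cons_injective_iff]
    exact ⟨fun ⟨i, hi⟩ ↦ (hlt i).ne hi, ha⟩

end Padic

/-- For a prime `p` and `k ≥ 1`, every finite `A ⊆ ℚ_p` with `|A| ≥ 2·p^(k−1)` admits a point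
`α` and `k` distinct elements `a₁,…,a_k` of `A`, all different from `α`, such that the
valuations `v(α − aᵢ)` are pairwise distinct. -/
theorem padic_distinct_valuations (p : ℕ) [Fact p.Prime] (k : ℕ) (hk : 1 ≤ k)
    (A : Finset ℚ_[p]) (hA : 2 * p ^ (k - 1) ≤ A.card) :
    ∃ α : ℚ_[p], ∃ a : Fin k → ℚ_[p], (∀ i, a i ∈ A) ∧ Function.Injective a ∧
      (∀ i, α ≠ a i) ∧
      ∀ i j : Fin k, i ≠ j → (α - a i).valuation ≠ (α - a j).valuation := by
  obtain ⟨k, rfl⟩ : ∃ j, k = j + 1 := ⟨k - 1, by omega⟩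
  obtain ⟨α, -, a, ha, hinj⟩ := Padic.exists_injective_norm_sub_of_two_mul_pow_le_card k hA
  have hne : ∀ i, α - a i ≠ 0 := fun i ↦ sub_ne_zero.2 (ha i).2.symm
  refine ⟨α, a, fun i ↦ (ha i).1, hinj.of_comp (f := fun b ↦ ‖α - b‖),
    fun i ↦ (ha i).2.symm, fun i j hij hv ↦ hij (hinj ?_)⟩
  simp only [Padic.norm_eq_zpow_neg_valuation (hne i), Padic.norm_eq_zpow_neg_valuation (hne j), hv]
end
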